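/- arXiv:1902.03408 — 3 statements merged into one kernel-verified Lean document; each statement's English description precedes it below -/
import Mathlib

section
/- Fix projective plane identifications. For every cell x of the infinite magic carpet IMC there exists M such that for all integers m ≥ M, the ball of radius m·2^m around x satisfies #B(x, m·2^m) ≥ 8^m. -/
/-!
Magic carpets (Sierpinski carpet with torus / Klein bottle / projective plane
identifications of the sides of the vacant squares), following
"Analysis on the projective octagasket and other fractafolds" setup of the paper
"Magic carpets" (Goodman–Siu–Strichartz et al.).

Cells of the infinite blowup are indexed by their lower-left corners in `ℤ × ℤ`
(in units where every cell is a unit square).  A lattice square is a cell iff no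
base-3 digit position carries the digit `1` in both coordinates simultaneously.
The vacant square ("hole") of level `s` at block `(a, b)` is the middle ninth of
the level-`(s+1)` block with block coordinates `(a, b)`, i.e. the square
`[a·3^(s+1)+3^s, a·3^(s+1)+2·3^s) × [b·3^(s+1)+3^s, b·3^(s+1)+2·3^s)`; it is a
genuine vacant square of the carpet iff `(a,b)` itself satisfies the cell
condition.  Opposite sides of each vacant square are identified according to the
chosen identification type; orientation-reversal of a pair of sides reverses the
transverse coordinate.
-/

namespace MagicCarpet

/-- The three ways of identifying the two pairs of opposite sides of a vacant square:
torus (both pairs orientation preserved), Klein bottle (one pair preserved, one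
reversed) and projective plane (both pairs reversed). -/
inductive IdentType
  | torus
  | klein
  | proj
  deriving DecidableEq

/-- Whether crossing a vacant square horizontally (through its vertical pair of sides)
reverses the transverse (vertical) coordinate. -/
def flipH : IdentType → Bool
  | .torus => false
  | .klein => false
  | .proj => true

/-- Whether crossing a vacant square vertically (through its horizontal pair of sides)
reverses the transverse (horizontal) coordinate. -/
def flipV : IdentType → Bool
  | .torus => false
  | .klein => true
  | .proj => true

/-- An assignment of an identification type to every vacant square; the vacant square of
level `s` at block `(a, b)` receives the type `ι s a b`. -/
abbrev IdentAssignment := ℕ → ℤ → ℤ → IdentType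

/-- The uniform assignment: the same identification type at every vacant square. -/
def uniform (t : IdentType) : IdentAssignment := fun _ _ _ => t

/-- The base-3 digit of an integer at position `k` (floor division, so digits of
negative integers are eventually `2`). -/
def dig (k : ℕ) (n : ℤ) : ℤ := Int.emod (Int.ediv n (3 ^ k)) 3

/-- `p` is (the lower-left corner of) a cell of the infinite blowup of the Sierpinski
carpet iff no base-3 digit position carries the digit `1` in both coordinates. -/
def IsCell (p : ℤ × ℤ) : Prop := ∀ k : ℕ, ¬(dig k p.1 = 1 ∧ dig k p.2 = 1)

/-- The cells of the infinite magic carpet. -/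
def Cell : Type := { p : ℤ × ℤ // IsCell p }

/-- `p` and `q` are glued across the vacant square of level `s` at block `(a, b)`
horizontally: `p` is the cell immediately to the left of the vacant square, `q` the
corresponding cell immediately to its right (with the transverse coordinate reversed
when the identification of that pair of sides is orientation reversing). -/
def HoleAdjH (ι : IdentAssignment) (p q : ℤ × ℤ) : Prop :=
  ∃ (s : ℕ) (a b : ℤ), IsCell (a, b) ∧
    p.1 = a * 3 ^ (s + 1) + 3 ^ s - 1 ∧
    q.1 = a * 3 ^ (s + 1) + 2 * 3 ^ s ∧
    b * 3 ^ (s + 1) + 3 ^ s ≤ p.2 ∧ p.2 < b * 3 ^ (s + 1) + 2 * 3 ^ s ∧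
    q.2 = if flipH (ι s a b) then 2 * (b * 3 ^ (s + 1) + 3 ^ s) + 3 ^ s - 1 - p.2 else p.2

/-- Vertical analogue of `HoleAdjH`: `p` is immediately below the vacant square and `q`
immediately above it. -/
def HoleAdjV (ι : IdentAssignment) (p q : ℤ × ℤ) : Prop :=
  ∃ (s : ℕ) (a b : ℤ), IsCell (a, b) ∧
    p.2 = b * 3 ^ (s + 1) + 3 ^ s - 1 ∧
    q.2 = b * 3 ^ (s + 1) + 2 * 3 ^ s ∧
    a * 3 ^ (s + 1) + 3 ^ s ≤ p.1 ∧ p.1 < a * 3 ^ (s + 1) + 2 * 3 ^ s ∧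
    q.1 = if flipV (ι s a b) then 2 * (a * 3 ^ (s + 1) + 3 ^ s) + 3 ^ s - 1 - p.1 else p.1

/-- Two cells of the infinite magic carpet are adjacent iff they share an edge after
identification: either they share an edge in the plane, or they are glued together
across some vacant square. -/
def IMCAdj (ι : IdentAssignment) (p q : ℤ × ℤ) : Prop :=
  IsCell p ∧ IsCell q ∧ p ≠ q ∧
    (|p.1 - q.1| + |p.2 - q.2| = 1 ∨
      HoleAdjH ι p q ∨ HoleAdjH ι q p ∨ HoleAdjV ι p q ∨ HoleAdjV ι q p)

/-- The infinite magic carpet graph `IMC` determined by the identification assignment `ι`: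
vertices are the cells, two cells being adjacent exactly when they share an edge after
identification. -/
def IMC (ι : IdentAssignment) : SimpleGraph Cell where
  Adj p q := IMCAdj ι p.val q.val
  symm := by
    constructor
    rintro p q ⟨hp, hq, hne, hd⟩
    refine ⟨hq, hp, hne.symm, ?_⟩
    rcases hd with h | h | h | h | h
    · left
      rw [abs_sub_comm q.val.1 p.val.1, abs_sub_comm q.val.2 p.val.2]
      exact h
    · exact Or.inr (Or.inr (Or.inl h))
    · exact Or.inr (Or.inl h)
    · exact Or.inr (Or.inr (Or.inr (Or.inr h)))
    · exact Or.inr (Or.inr (Or.inr (Or.inl h)))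
  loopless := by
    constructor
    rintro p ⟨_, _, hne, _⟩
    exact hne rfl

/-- The ball `B(x, r)` of radius `r` around the cell `x`, in the geodesic graph metric
(the distance between two cells is the length of a shortest path of successively
adjacent cells joining them). -/
def ball (ι : IdentAssignment) (x : Cell) (r : ℕ) : Set Cell :=
  { y | (IMC ι).dist x y < r }

/-- The block coordinates of the copy of `V_m` containing the cell `p`. -/
def copyOf (m : ℕ) (p : Cell) : ℤ × ℤ :=
  (Int.ediv p.val.1 (3 ^ m), Int.ediv p.val.2 (3 ^ m))

/-- The cell `p` belongs to the copy of `V_m` with block coordinates `C`. -/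
def InCopy (m : ℕ) (C : ℤ × ℤ) (p : Cell) : Prop := copyOf m p = C

/-- The `3^m × 3^m` block with block coordinates `C` is a copy of `V_m` inside the
infinite magic carpet. -/
def IsCopy (C : ℤ × ℤ) : Prop := IsCell C

/-- `p` is one of the four corner cells of the copy of `V_m` at block `C`. -/
def IsCornerCell (m : ℕ) (C : ℤ × ℤ) (p : Cell) : Prop :=
  InCopy m C p ∧
    (p.val.1 = C.1 * 3 ^ m ∨ p.val.1 = (C.1 + 1) * 3 ^ m - 1) ∧
    (p.val.2 = C.2 * 3 ^ m ∨ p.val.2 = (C.2 + 1) * 3 ^ m - 1)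

/-- The sequence `R` with `R 0 = 0` and `R (m+1) = max (2·R m + 3) (2·R m + 2^m + 1)`. -/
def R : ℕ → ℕ
  | 0 => 0
  | m + 1 => max (2 * R m + 3) (2 * R m + 2 ^ m + 1)

/-- The four sides of a square block (or of a rectangular stack of blocks). -/
inductive Side
  | left
  | right
  | bottom
  | top
  deriving DecidableEq

/-- The opposite side. -/
def Side.opp : Side → Side
  | .left => .right
  | .right => .left
  | .bottom => .top
  | .top => .bottom

/-- The cell `p` lies in the copy of `V_m` at block `C`, along its side `d` (so one of the
edges of `p` lies on the corresponding `m`-edge of that copy). -/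
def OnSide (m : ℕ) (C : ℤ × ℤ) (d : Side) (p : Cell) : Prop :=
  InCopy m C p ∧
    match d with
    | .left => p.val.1 = C.1 * 3 ^ m
    | .right => p.val.1 = (C.1 + 1) * 3 ^ m - 1
    | .bottom => p.val.2 = C.2 * 3 ^ m
    | .top => p.val.2 = (C.2 + 1) * 3 ^ m - 1

/-- The column of cells with first coordinate `c` hits (has a cell whose edge lies on the
boundary of) the vacant square of level `s` whose horizontal block coordinate is `a`. -/
def ColumnHitsStitch (s : ℕ) (a : ℤ) (c : ℤ) : Prop :=
  a * 3 ^ (s + 1) + 3 ^ s - 1 ≤ c ∧ c ≤ a * 3 ^ (s + 1) + 2 * 3 ^ s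

/-- The vacant square of level `s` at block `(a, b)` lies in the interior of the copy of
`V_m` at block `C`. -/
def HoleInsideCopy (m : ℕ) (C : ℤ × ℤ) (s : ℕ) (a b : ℤ) : Prop :=
  C.1 * 3 ^ m ≤ a * 3 ^ (s + 1) ∧ (a + 1) * 3 ^ (s + 1) ≤ (C.1 + 1) * 3 ^ m ∧
  C.2 * 3 ^ m ≤ b * 3 ^ (s + 1) ∧ (b + 1) * 3 ^ (s + 1) ≤ (C.2 + 1) * 3 ^ m

/-- The copy of `V_m` at block `W` is glued just above the copy at block `V` (they are
vertical neighbours, intersecting along a horizontal `m`-edge): either the blocks are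
adjacent in the plane, or the top side of `V` and the bottom side of `W` are identified
sides of a vacant square of level `≥ m`.  The flag `f` records whether this gluing
reverses the horizontal coordinate. -/
def GluedVert (ι : IdentAssignment) (m : ℕ) (V W : ℤ × ℤ) (f : Bool) : Prop :=
  IsCell V ∧ IsCell W ∧
    ((W.1 = V.1 ∧ W.2 = V.2 + 1 ∧ f = false) ∨
      ∃ (s : ℕ) (a b : ℤ), m ≤ s ∧ IsCell (a, b) ∧
        (V.2 + 1) * 3 ^ m = b * 3 ^ (s + 1) + 3 ^ s ∧
        W.2 * 3 ^ m = b * 3 ^ (s + 1) + 2 * 3 ^ s ∧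
        a * 3 ^ (s + 1) + 3 ^ s ≤ V.1 * 3 ^ m ∧
        (V.1 + 1) * 3 ^ m ≤ a * 3 ^ (s + 1) + 2 * 3 ^ s ∧
        f = flipV (ι s a b) ∧
        (if f then W.1 * 3 ^ m = 2 * (a * 3 ^ (s + 1) + 3 ^ s) + 3 ^ s - (V.1 + 1) * 3 ^ m
          else W.1 = V.1))

/-- Horizontal analogue of `GluedVert`: `W` is glued just to the right of `V` (they are
horizontal neighbours, intersecting along a vertical `m`-edge). -/
def GluedHoriz (ι : IdentAssignment) (m : ℕ) (V W : ℤ × ℤ) (f : Bool) : Prop :=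
  IsCell V ∧ IsCell W ∧
    ((W.2 = V.2 ∧ W.1 = V.1 + 1 ∧ f = false) ∨
      ∃ (s : ℕ) (a b : ℤ), m ≤ s ∧ IsCell (a, b) ∧
        (V.1 + 1) * 3 ^ m = a * 3 ^ (s + 1) + 3 ^ s ∧
        W.1 * 3 ^ m = a * 3 ^ (s + 1) + 2 * 3 ^ s ∧
        b * 3 ^ (s + 1) + 3 ^ s ≤ V.2 * 3 ^ m ∧
        (V.2 + 1) * 3 ^ m ≤ b * 3 ^ (s + 1) + 2 * 3 ^ s ∧
        f = flipH (ι s a b) ∧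
        (if f then W.2 * 3 ^ m = 2 * (b * 3 ^ (s + 1) + 3 ^ s) + 3 ^ s - (V.2 + 1) * 3 ^ m
          else W.2 = V.2))

/-- An `m`-stack: a finite sequence of copies of `V_m`, consecutive copies being all
horizontal neighbours or all vertical neighbours.  Each copy carries a Boolean flag
recording its orientation relative to the first copy (so that the stack is isomorphic,
as a cell graph, to a rectangular stack of copies of `V_m`). -/
structure MStack (ι : IdentAssignment) (m : ℕ) where
  vert : Bool
  blocks : List ((ℤ × ℤ) × Bool)
  nonempty : blocks ≠ []
  copies : ∀ Bf ∈ blocks, IsCell Bf.1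
  head_flip : (blocks.head nonempty).2 = false
  chain : blocks.Chain' fun Vf Wf => ∃ g : Bool,
    (if vert then GluedVert ι m Vf.1 Wf.1 g else GluedHoriz ι m Vf.1 Wf.1 g) ∧
      Wf.2 = xor Vf.2 g

/-- The cell `p` lies in (one of the copies of `V_m` constituting) the `m`-stack `st`. -/
def MStack.MemCell {ι : IdentAssignment} {m : ℕ} (st : MStack ι m) (p : Cell) : Prop :=
  ∃ Bf ∈ st.blocks, copyOf m p = Bf.1

/-- The side `d` of the `3^m × 3^m` block `B`, as a set of points of the plane. -/
def blockSideSet (m : ℕ) (B : ℤ × ℤ) (d : Side) : Set (ℤ × ℤ) :=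
  match d with
  | .left => { p | p.1 = B.1 * 3 ^ m ∧ B.2 * 3 ^ m ≤ p.2 ∧ p.2 ≤ (B.2 + 1) * 3 ^ m }
  | .right => { p | p.1 = (B.1 + 1) * 3 ^ m ∧ B.2 * 3 ^ m ≤ p.2 ∧ p.2 ≤ (B.2 + 1) * 3 ^ m }
  | .bottom => { p | p.2 = B.2 * 3 ^ m ∧ B.1 * 3 ^ m ≤ p.1 ∧ p.1 ≤ (B.1 + 1) * 3 ^ m }
  | .top => { p | p.2 = (B.2 + 1) * 3 ^ m ∧ B.1 * 3 ^ m ≤ p.1 ∧ p.1 ≤ (B.1 + 1) * 3 ^ m }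

/-- The side `d` of the rectangular outer boundary of the `m`-stack `st`, as a set of
points of the plane (taking the recorded orientation flips into account). -/
def MStack.sideSet {ι : IdentAssignment} {m : ℕ} (st : MStack ι m) (d : Side) :
    Set (ℤ × ℤ) :=
  if st.vert then
    (match d with
    | .bottom => blockSideSet m (st.blocks.head st.nonempty).1 .bottom
    | .top => blockSideSet m (st.blocks.getLast st.nonempty).1 .top
    | .left =>
        { p | ∃ Bf ∈ st.blocks, p ∈ blockSideSet m Bf.1 (if Bf.2 then Side.right else Side.left) }
    | .right =>
        { p | ∃ Bf ∈ st.blocks, p ∈ blockSideSet m Bf.1 (if Bf.2 then Side.left else Side.right) })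
  else
    (match d with
    | .left => blockSideSet m (st.blocks.head st.nonempty).1 .left
    | .right => blockSideSet m (st.blocks.getLast st.nonempty).1 .right
    | .bottom =>
        { p | ∃ Bf ∈ st.blocks, p ∈ blockSideSet m Bf.1 (if Bf.2 then Side.top else Side.bottom) }
    | .top =>
        { p | ∃ Bf ∈ st.blocks, p ∈ blockSideSet m Bf.1 (if Bf.2 then Side.bottom else Side.top) })

/-- The side `d` of the unit cell with lower-left corner `c`, as a set of points. -/
def cellEdge (c : ℤ × ℤ) (d : Side) : Set (ℤ × ℤ) :=
  match d with
  | .left => { p | p.1 = c.1 ∧ c.2 ≤ p.2 ∧ p.2 ≤ c.2 + 1 }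
  | .right => { p | p.1 = c.1 + 1 ∧ c.2 ≤ p.2 ∧ p.2 ≤ c.2 + 1 }
  | .bottom => { p | p.2 = c.2 ∧ c.1 ≤ p.1 ∧ p.1 ≤ c.1 + 1 }
  | .top => { p | p.2 = c.2 + 1 ∧ c.1 ≤ p.1 ∧ p.1 ≤ c.1 + 1 }

/-- The cell `c` is on the set `S` (one of its four edges is contained in `S`). -/
def CellOnSet (c : Cell) (S : Set (ℤ × ℤ)) : Prop :=
  ∃ d : Side, cellEdge c.val d ⊆ S

/-- An axis-parallel segment of length `3^m` with `3^m`-aligned endpoints: if `vert` it is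
`{a·3^m} × [b·3^m, (b+1)·3^m]`, otherwise `[a·3^m, (a+1)·3^m] × {b·3^m}`.  (The `m`-edges
of the infinite magic carpet are such segments, taken up to identification.) -/
structure Seg where
  vert : Bool
  a : ℤ
  b : ℤ

/-- The set of points of the segment `e` (at scale `3^m`). -/
def Seg.pts (m : ℕ) (e : Seg) : Set (ℤ × ℤ) :=
  if e.vert then { p | p.1 = e.a * 3 ^ m ∧ e.b * 3 ^ m ≤ p.2 ∧ p.2 ≤ (e.b + 1) * 3 ^ m }
  else { p | p.2 = e.b * 3 ^ m ∧ e.a * 3 ^ m ≤ p.1 ∧ p.1 ≤ (e.a + 1) * 3 ^ m }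

/-- The segments `e` (on the left or bottom side of a vacant square of level `≥ m`) and
`e'` (the corresponding subsegment of the opposite side of that vacant square) are glued
by the identification of the sides of that vacant square. -/
def SegGlue (ι : IdentAssignment) (m : ℕ) (e e' : Seg) : Prop :=
  ∃ (s : ℕ) (a b : ℤ), m ≤ s ∧ IsCell (a, b) ∧
    ((e.vert = true ∧ e'.vert = true ∧
        e.a * 3 ^ m = a * 3 ^ (s + 1) + 3 ^ s ∧
        e'.a * 3 ^ m = a * 3 ^ (s + 1) + 2 * 3 ^ s ∧
        b * 3 ^ (s + 1) + 3 ^ s ≤ e.b * 3 ^ m ∧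
        (e.b + 1) * 3 ^ m ≤ b * 3 ^ (s + 1) + 2 * 3 ^ s ∧
        (if flipH (ι s a b) then
          e'.b * 3 ^ m = 2 * (b * 3 ^ (s + 1) + 3 ^ s) + 3 ^ s - (e.b + 1) * 3 ^ m
         else e'.b = e.b)) ∨
      (e.vert = false ∧ e'.vert = false ∧
        e.b * 3 ^ m = b * 3 ^ (s + 1) + 3 ^ s ∧
        e'.b * 3 ^ m = b * 3 ^ (s + 1) + 2 * 3 ^ s ∧
        a * 3 ^ (s + 1) + 3 ^ s ≤ e.a * 3 ^ m ∧
        (e.a + 1) * 3 ^ m ≤ a * 3 ^ (s + 1) + 2 * 3 ^ s ∧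
        (if flipV (ι s a b) then
          e'.a * 3 ^ m = 2 * (a * 3 ^ (s + 1) + 3 ^ s) + 3 ^ s - (e.a + 1) * 3 ^ m
         else e'.a = e.a)))

/-- Two segments represent the same `m`-edge of the infinite magic carpet iff they are
related by the equivalence generated by the gluings of the sides of the vacant squares. -/
def SegEquiv (ι : IdentAssignment) (m : ℕ) : Seg → Seg → Prop :=
  Relation.EqvGen fun e e' => SegGlue ι m e e' ∨ SegGlue ι m e' e

/-- The lattice points `p` (on the left or bottom side of a vacant square) and `q` (the
corresponding point of the opposite side) are glued by the identification of the sides of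
that vacant square. -/
def PtGlue (ι : IdentAssignment) (p q : ℤ × ℤ) : Prop :=
  ∃ (s : ℕ) (a b : ℤ), IsCell (a, b) ∧
    ((p.1 = a * 3 ^ (s + 1) + 3 ^ s ∧ q.1 = a * 3 ^ (s + 1) + 2 * 3 ^ s ∧
        b * 3 ^ (s + 1) + 3 ^ s ≤ p.2 ∧ p.2 ≤ b * 3 ^ (s + 1) + 2 * 3 ^ s ∧
        q.2 = if flipH (ι s a b) then 2 * (b * 3 ^ (s + 1) + 3 ^ s) + 3 ^ s - p.2 else p.2) ∨
      (p.2 = b * 3 ^ (s + 1) + 3 ^ s ∧ q.2 = b * 3 ^ (s + 1) + 2 * 3 ^ s ∧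
        a * 3 ^ (s + 1) + 3 ^ s ≤ p.1 ∧ p.1 ≤ a * 3 ^ (s + 1) + 2 * 3 ^ s ∧
        q.1 = if flipV (ι s a b) then 2 * (a * 3 ^ (s + 1) + 3 ^ s) + 3 ^ s - p.1 else p.1))

/-- Two lattice points represent the same vertex of the infinite magic carpet iff they
are related by the equivalence generated by the gluings of the sides of the vacant
squares. -/
def PtEquiv (ι : IdentAssignment) : ℤ × ℤ → ℤ × ℤ → Prop :=
  Relation.EqvGen fun p q => PtGlue ι p q ∨ PtGlue ι q p

/-- The segment forming the side `d` of the `3^m × 3^m` block `B`. -/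
def BlockSide (m : ℕ) (B : ℤ × ℤ) (d : Side) : Seg :=
  match d with
  | .left => ⟨true, B.1, B.2⟩
  | .right => ⟨true, B.1 + 1, B.2⟩
  | .bottom => ⟨false, B.1, B.2⟩
  | .top => ⟨false, B.1, B.2 + 1⟩

/-- The segment `e` represents the `m`-edge `E_{V,W}` along which the two distinct copies
`V` and `W` of `V_m` intersect after identification. -/
def IsEdgeBetween (ι : IdentAssignment) (m : ℕ) (V W : ℤ × ℤ) (e : Seg) : Prop :=
  V ≠ W ∧ IsCell V ∧ IsCell W ∧
    ∃ d d' : Side, SegEquiv ι m e (BlockSide m V d) ∧ SegEquiv ι m e (BlockSide m W d')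

/-- The `m`-edges represented by `e` and `e'` intersect (after identification). -/
def SegIntersect (ι : IdentAssignment) (m : ℕ) (e e' : Seg) : Prop :=
  ∃ (e₁ e₂ : Seg) (p q : ℤ × ℤ), SegEquiv ι m e e₁ ∧ SegEquiv ι m e' e₂ ∧
    p ∈ e₁.pts m ∧ q ∈ e₂.pts m ∧ PtEquiv ι p q

/-- The cell `c` is on the `m`-edge represented by `e` (one of its edges lies on the
`m`-edge, after identification). -/
def CellOnSeg (ι : IdentAssignment) (m : ℕ) (e : Seg) (c : Cell) : Prop :=
  ∃ e' : Seg, SegEquiv ι m e e' ∧ CellOnSet c (Seg.pts m e')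

/-- The `m`-edge represented by `e` lies (after identification) inside the point set `S`. -/
def SegOnSet (ι : IdentAssignment) (m : ℕ) (e : Seg) (S : Set (ℤ × ℤ)) : Prop :=
  ∃ e' : Seg, SegEquiv ι m e e' ∧ Seg.pts m e' ⊆ S

/-- The point `p` lies (after identification) on the `m`-edge represented by `e`. -/
def PtOnSeg (ι : IdentAssignment) (m : ℕ) (e : Seg) (p : ℤ × ℤ) : Prop :=
  ∃ (e' : Seg) (q : ℤ × ℤ), SegEquiv ι m e e' ∧ q ∈ Seg.pts m e' ∧ PtEquiv ι p q

/-- The `m`-sequence of a path: the copies of `V_m` containing its successive cells, with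
consecutive repetitions deleted. -/
def mSeq (ι : IdentAssignment) (m : ℕ) {x y : Cell} (w : (IMC ι).Walk x y) :
    List (ℤ × ℤ) :=
  (w.support.map (copyOf m)).destutter (· ≠ ·)

/-- `(i, V, W)` is an `m`-segment-of-two of the list `L`: `V` is the `i`-th entry of `L`,
`W` the `(i+1)`-st, and neither `V` nor `W` is the `(i-1)`-st entry (if it exists). -/
def IsSegTwo (L : List (ℤ × ℤ)) (i : ℕ) (V W : ℤ × ℤ) : Prop :=
  L[i]? = some V ∧ L[i + 1]? = some W ∧
    (i = 0 ∨ ∀ U, L[i - 1]? = some U → U ≠ V ∧ U ≠ W)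

/-- The path `w` enters the `m`-segment-of-two with copies `V, W` through the `m`-edge
represented by `e`: it has consecutive cells, both on that `m`-edge, of which only the
second lies in `V` or `W`. -/
def EntersThrough (ι : IdentAssignment) (m : ℕ) {x y : Cell} (w : (IMC ι).Walk x y)
    (V W : ℤ × ℤ) (e : Seg) : Prop :=
  ∃ (n : ℕ) (c c' : Cell), w.support[n]? = some c ∧ w.support[n + 1]? = some c' ∧
    CellOnSeg ι m e c ∧ CellOnSeg ι m e c' ∧
    copyOf m c ≠ V ∧ copyOf m c ≠ W ∧ (copyOf m c' = V ∨ copyOf m c' = W)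

/-- The path `w` exits the `m`-segment-of-two with copies `V, W` through the `m`-edge
represented by `e`: it has consecutive cells, both on that `m`-edge, of which only the
first lies in `V` or `W`. -/
def ExitsThrough (ι : IdentAssignment) (m : ℕ) {x y : Cell} (w : (IMC ι).Walk x y)
    (V W : ℤ × ℤ) (e : Seg) : Prop :=
  ∃ (n : ℕ) (c c' : Cell), w.support[n]? = some c ∧ w.support[n + 1]? = some c' ∧
    CellOnSeg ι m e c ∧ CellOnSeg ι m e c' ∧
    (copyOf m c = V ∨ copyOf m c = W) ∧ copyOf m c' ≠ V ∧ copyOf m c' ≠ W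

/-- `p` is the center of the `m`-segment-of-two `(i, V, W)` of the path `w`: the vertex at
which `E_{V,W}` and those of `Ent(i)`, `Exit(i)` that exist all intersect. -/
def IsCenter (ι : IdentAssignment) (m : ℕ) {x y : Cell} (w : (IMC ι).Walk x y) (i : ℕ)
    (V W : ℤ × ℤ) (p : ℤ × ℤ) : Prop :=
  IsSegTwo (mSeq ι m w) i V W ∧
    (∃ e : Seg, EntersThrough ι m w V W e ∨ ExitsThrough ι m w V W e) ∧
    (∃ evw : Seg, IsEdgeBetween ι m V W evw ∧ PtOnSeg ι m evw p) ∧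
    (∀ e : Seg, EntersThrough ι m w V W e → PtOnSeg ι m e p) ∧
    (∀ e : Seg, ExitsThrough ι m w V W e → PtOnSeg ι m e p)

/-- `p` is one of the four corner points of the copy of `V_m` at block `C`. -/
def IsCornerPt (m : ℕ) (C : ℤ × ℤ) (p : ℤ × ℤ) : Prop :=
  (p.1 = C.1 * 3 ^ m ∨ p.1 = (C.1 + 1) * 3 ^ m) ∧
  (p.2 = C.2 * 3 ^ m ∨ p.2 = (C.2 + 1) * 3 ^ m)

/-- The copies of `V_m` at blocks `C` and `D` share a corner vertex (after
identification). -/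
def SharesCornerVertex (ι : IdentAssignment) (m : ℕ) (C D : ℤ × ℤ) : Prop :=
  ∃ p q : ℤ × ℤ, IsCornerPt m C p ∧ IsCornerPt m D q ∧ PtEquiv ι p q

/-- Reduction of cell coordinates modulo the period lattice `3^m · ℤ²`. -/
def redMod (m : ℕ) (p : ℤ × ℤ) : ℤ × ℤ := (Int.emod p.1 (3 ^ m), Int.emod p.2 (3 ^ m))

/-- `p` lies in the fundamental domain `[0, 3^m) × [0, 3^m)`. -/
def InFund (m : ℕ) (p : ℤ × ℤ) : Prop := 0 ≤ p.1 ∧ p.1 < 3 ^ m ∧ 0 ≤ p.2 ∧ p.2 < 3 ^ m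

/-- Adjacency across the outer boundary of `MCT_m` (opposite sides of the outer square
identified with orientation preserved). -/
def WrapAdj (m : ℕ) (p q : ℤ × ℤ) : Prop :=
  (p.1 = 3 ^ m - 1 ∧ q.1 = 0 ∧ q.2 = p.2) ∨ (p.2 = 3 ^ m - 1 ∧ q.2 = 0 ∧ q.1 = p.1)

/-- The cell graph of `MCT_m`, the level-`m` magic carpet with torus identifications of
all inner vacant squares and of the outer boundary, on the cells of the fundamental
domain. -/
def MCTAdj (m : ℕ) (p q : ℤ × ℤ) : Prop :=
  InFund m p ∧ InFund m q ∧ IsCell p ∧ IsCell q ∧ p ≠ q ∧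
    (|p.1 - q.1| + |p.2 - q.2| = 1 ∨
      HoleAdjH (uniform .torus) p q ∨ HoleAdjH (uniform .torus) q p ∨
      HoleAdjV (uniform .torus) p q ∨ HoleAdjV (uniform .torus) q p ∨
      WrapAdj m p q ∨ WrapAdj m q p)

/-!
A copy of `V_m` contains `8^m` cells, so it suffices to show that any two cells of one copy are
at distance at most `36·2^m`, which is `< m·2^m` once `m ≥ 37`. The point is that with projective
identifications the distance between corners of a copy only doubles from one level to the next,
instead of tripling: inside a copy of `V_{m+1}`, a path leaving the bottom-right corner of the
left middle subcopy across the central vacant square arrives at the *top*-left corner of the right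
middle subcopy, because the identification reverses orientation. Hence two opposite corners of a
copy of `V_{m+1}` are joined through just two diagonal crossings of copies of `V_m` plus three
steps, and side-adjacent corners through two diagonals, one side and three steps. An arbitrary
cell is then within `18·2^m` of each corner of its copy.

Since `SimpleGraph.dist` is `0` between unreachable vertices and `Set.ncard` is `0` on infinite
sets, the count also needs the carpet to be connected and its balls to be finite; the latter
holds for every identification type because a neighbour of `p` has coordinates of size `O(|p|)`.
-/

open SimpleGraph

section GraphMetric

variable {V : Type*} {G : SimpleGraph V} {u v w : V}

theorem edist_le_add_of_le {a b : ℕ} (h₁ : G.edist u v ≤ a) (h₂ : G.edist v w ≤ b) :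
    G.edist u w ≤ ↑(a + b) := by
  push_cast
  exact G.edist_triangle.trans (add_le_add h₁ h₂)

theorem edist_le_one_of_adj (h : G.Adj u v) : G.edist u v ≤ (1 : ℕ) := by
  rw [edist_eq_one_iff_adj.mpr h, Nat.cast_one]

theorem dist_le_of_edist_le {n : ℕ} (h : G.edist u v ≤ n) : G.dist u v ≤ n :=
  ENat.toNat_le_of_le_natCast h

end GraphMetric

theorem dig_eq (k : ℕ) (n : ℤ) : dig k n = n / 3 ^ k % 3 := rfl

theorem dig_succ (k : ℕ) (n : ℤ) : dig (k + 1) n = dig k (n / 3) := by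
  rw [dig_eq, dig_eq, pow_succ', Int.ediv_ediv_of_nonneg (by norm_num)]

theorem dig_ediv_pow (m k : ℕ) (n : ℤ) : dig k (n / 3 ^ m) = dig (m + k) n := by
  rw [dig_eq, dig_eq, pow_add, Int.ediv_ediv_of_nonneg (by positivity)]

theorem dig_three_mul_add {c i : ℤ} (hi : 0 ≤ i ∧ i < 3) (k : ℕ) :
    dig k (3 * c + i) = if k = 0 then i else dig (k - 1) c := by
  cases k with
  | zero => simp only [dig_eq, pow_zero, Int.ediv_one, if_true]; omega
  | succ k => rw [dig_succ]; simp only [Nat.add_sub_cancel]; congr 1; omega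

theorem isCell_three_mul_add {C : ℤ × ℤ} (hC : IsCell C) {i j : ℤ} (hi : 0 ≤ i ∧ i < 3)
    (hj : 0 ≤ j ∧ j < 3) (hij : (i, j) ≠ (1, 1)) : IsCell (3 * C.1 + i, 3 * C.2 + j) := by
  rintro (_ | k)
  · simpa [dig_three_mul_add hi, dig_three_mul_add hj] using hij
  · simpa [dig_three_mul_add hi, dig_three_mul_add hj] using hC k

theorem isCell_zero_fst (t : ℤ) : IsCell (0, t) := by
  intro k
  simp [dig_eq]

theorem isCell_copyOf (m : ℕ) (u : Cell) : IsCell (copyOf m u) := fun k => by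
  simpa only [copyOf, ← Int.div_def, dig_ediv_pow] using u.2 (m + k)

theorem copyOf_succ (m : ℕ) (u : Cell) :
    copyOf (m + 1) u = ((copyOf m u).1 / 3, (copyOf m u).2 / 3) := by
  simp only [copyOf, ← Int.div_def, pow_succ,
    Int.ediv_ediv_of_nonneg (by positivity : (0 : ℤ) ≤ 3 ^ m)]

/-- The copy of `V_m` containing `u`, itself a cell of the carpet scaled down by `3^m`. -/
def copy (m : ℕ) (u : Cell) : Cell := ⟨copyOf m u, isCell_copyOf m u⟩

theorem copy_zero (u : Cell) : copy 0 u = u := by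
  apply Subtype.ext
  simp [copy, copyOf, ← Int.div_def]

/-- Throughout, a Boolean `true` selects the right (first coordinate) or top (second coordinate)
side. -/
def side (h : Bool) : ℤ := if h then 2 else 0

inductive SubPos
  | corner (h v : Bool)
  | midCol (v : Bool)
  | midRow (h : Bool)
  deriving DecidableEq, Fintype

def SubPos.digits : SubPos → ℤ × ℤ
  | corner h v => (side h, side v)
  | midCol v => (1, side v)
  | midRow h => (side h, 1)

theorem SubPos.digits_injective : Function.Injective SubPos.digits := by decide

theorem SubPos.digits_spec (t : SubPos) :
    (0 ≤ t.digits.1 ∧ t.digits.1 < 3) ∧ (0 ≤ t.digits.2 ∧ t.digits.2 < 3) ∧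
      t.digits ≠ (1, 1) := by
  revert t; decide

theorem SubPos.exists_digits_eq {i j : ℤ} (hi : 0 ≤ i ∧ i < 3) (hj : 0 ≤ j ∧ j < 3)
    (hij : (i, j) ≠ (1, 1)) : ∃ t : SubPos, t.digits = (i, j) := by
  obtain rfl | rfl | rfl : i = 0 ∨ i = 1 ∨ i = 2 := by omega
  all_goals obtain rfl | rfl | rfl : j = 0 ∨ j = 1 ∨ j = 2 := by omega
  exacts [⟨corner false false, rfl⟩, ⟨midRow false, rfl⟩, ⟨corner false true, rfl⟩,
    ⟨midCol false, rfl⟩, absurd rfl hij, ⟨midCol true, rfl⟩,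
    ⟨corner true false, rfl⟩, ⟨midRow true, rfl⟩, ⟨corner true true, rfl⟩]

def subCopy (C : Cell) (t : SubPos) : Cell :=
  ⟨(3 * C.val.1 + t.digits.1, 3 * C.val.2 + t.digits.2),
    isCell_three_mul_add C.2 t.digits_spec.1 t.digits_spec.2.1 t.digits_spec.2.2⟩

theorem subCopy_injective (C : Cell) : Function.Injective (subCopy C) := by
  intro t t' h
  apply SubPos.digits_injective
  have h₁ := congrArg (·.val.1) h
  have h₂ := congrArg (·.val.2) h
  simp only [subCopy, add_right_inj] at h₁ h₂
  exact Prod.ext h₁ h₂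

theorem copy_succ_of_copy_eq_subCopy {m : ℕ} {u C : Cell} {t : SubPos}
    (h : copy m u = subCopy C t) : copy (m + 1) u = C := by
  have h₁ := congrArg (·.val.1) h
  have h₂ := congrArg (·.val.2) h
  have := t.digits_spec
  simp only [copy, subCopy] at h₁ h₂
  apply Subtype.ext
  simp only [copy, copyOf_succ, h₁, h₂]
  ext <;> simp <;> omega

theorem exists_copy_eq_subCopy (m : ℕ) (u : Cell) :
    ∃ t, copy m u = subCopy (copy (m + 1) u) t := by
  have hS : ¬((copyOf m u).1 % 3 = 1 ∧ (copyOf m u).2 % 3 = 1) := by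
    simpa [dig_eq] using isCell_copyOf m u 0
  obtain ⟨t, ht⟩ := SubPos.exists_digits_eq (i := (copyOf m u).1 % 3)
    (j := (copyOf m u).2 % 3) (by omega) (by omega) (by simpa using hS)
  refine ⟨t, Subtype.ext ?_⟩
  simp only [copy, subCopy, ht, copyOf_succ]
  ext <;> simp <;> omega

theorem exists_finset_copy_eq (m : ℕ) (C : Cell) :
    ∃ s : Finset Cell, s.card = 8 ^ m ∧ ∀ u ∈ s, copy m u = C := by
  classical
  induction m generalizing C with
  | zero => exact ⟨{C}, rfl, by simp [copy_zero]⟩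
  | succ m ih =>
    choose S hcard hS using ih
    refine ⟨Finset.univ.biUnion fun t => S (subCopy C t), ?_, ?_⟩
    · have hcard8 : Fintype.card SubPos = 8 := rfl
      rw [Finset.card_biUnion]
      · simp only [hcard, Finset.sum_const, Finset.card_univ, hcard8, smul_eq_mul, pow_succ']
      · intro t _ t' _ htt'
        refine Finset.disjoint_left.mpr fun u hu hu' => htt' (subCopy_injective C ?_)
        rw [← hS _ u hu, ← hS _ u hu']
    · simp only [Finset.mem_biUnion, Finset.mem_univ, true_and]
      rintro u ⟨t, hu⟩
      exact copy_succ_of_copy_eq_subCopy (hS _ u hu)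

theorem abs_sub_add_abs_sub_le_of_hole {s : ℕ} {f : Bool} {a b p₁ q₁ p₂ q₂ : ℤ}
    (h₁ : p₁ = a * 3 ^ (s + 1) + 3 ^ s - 1) (h₂ : q₁ = a * 3 ^ (s + 1) + 2 * 3 ^ s)
    (h₃ : b * 3 ^ (s + 1) + 3 ^ s ≤ p₂) (h₄ : p₂ < b * 3 ^ (s + 1) + 2 * 3 ^ s)
    (h₅ : q₂ = if f then 2 * (b * 3 ^ (s + 1) + 3 ^ s) + 3 ^ s - 1 - p₂ else p₂) :
    |p₁ - q₁| + |p₂ - q₂| ≤ 2 * |p₁| + 2 ∧ |p₁ - q₁| + |p₂ - q₂| ≤ 2 * |q₁| := by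
  have ht : (0 : ℤ) < 3 ^ s := by positivity
  rw [pow_succ] at h₁ h₂
  have hat : 0 ≤ a * 3 ^ s ∨ a * 3 ^ s ≤ -3 ^ s := by
    rcases le_or_gt 0 a with ha | ha
    · exact Or.inl (by positivity)
    · exact Or.inr (by nlinarith)
  have hΔ₁ : |p₁ - q₁| = 3 ^ s + 1 := by
    rw [show p₁ - q₁ = -(3 ^ s + 1) by linarith, abs_neg, abs_of_pos (by linarith)]
  have hΔ₂ : |p₂ - q₂| ≤ 3 ^ s - 1 := by
    rw [abs_le]
    split_ifs at h₅ <;> constructor <;> linarith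
  have hp : 3 ^ s - 1 ≤ |p₁| := by
    rcases hat with h | h <;> linarith [le_abs_self p₁, neg_abs_le p₁]
  have hq : 3 ^ s ≤ |q₁| := by
    rcases hat with h | h <;> linarith [le_abs_self q₁, neg_abs_le q₁]
  constructor <;> linarith

theorem abs_sub_add_abs_sub_le_of_imcAdj {ι : IdentAssignment} {p q : ℤ × ℤ}
    (h : IMCAdj ι p q) : |p.1 - q.1| + |p.2 - q.2| ≤ 2 * (|p.1| + |p.2|) + 2 := by
  have h₁ := abs_nonneg p.1
  have h₂ := abs_nonneg p.2
  obtain ⟨-, -, -, h | ⟨s, a, b, -, h⟩ | ⟨s, a, b, -, h⟩ | ⟨s, a, b, -, h⟩ | ⟨s, a, b, -, h⟩⟩ := h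
  · linarith
  · linarith [(abs_sub_add_abs_sub_le_of_hole h.1 h.2.1 h.2.2.1 h.2.2.2.1 h.2.2.2.2).1]
  · have := (abs_sub_add_abs_sub_le_of_hole h.1 h.2.1 h.2.2.1 h.2.2.2.1 h.2.2.2.2).2
    rw [abs_sub_comm q.1, abs_sub_comm q.2] at this
    linarith
  · linarith [(abs_sub_add_abs_sub_le_of_hole h.1 h.2.1 h.2.2.1 h.2.2.2.1 h.2.2.2.2).1]
  · have := (abs_sub_add_abs_sub_le_of_hole h.1 h.2.1 h.2.2.1 h.2.2.2.1 h.2.2.2.2).2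
    rw [abs_sub_comm q.1, abs_sub_comm q.2] at this
    linarith

theorem abs_add_abs_le_of_walk {ι : IdentAssignment} {x y : Cell} (w : (IMC ι).Walk x y) :
    |y.val.1| + |y.val.2| + 1 ≤ 3 ^ w.length * (|x.val.1| + |x.val.2| + 1) := by
  induction w with
  | nil => simp
  | @cons x z y hxz w ih =>
    have hz : |z.val.1| + |z.val.2| + 1 ≤ 3 * (|x.val.1| + |x.val.2| + 1) := by
      linarith [abs_sub_add_abs_sub_le_of_imcAdj hxz, abs_sub_abs_le_abs_sub z.val.1 x.val.1,
        abs_sub_abs_le_abs_sub z.val.2 x.val.2, abs_sub_comm z.val.1 x.val.1,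
        abs_sub_comm z.val.2 x.val.2]
    calc |y.val.1| + |y.val.2| + 1 ≤ 3 ^ w.length * (|z.val.1| + |z.val.2| + 1) := ih
      _ ≤ 3 ^ w.length * (3 * (|x.val.1| + |x.val.2| + 1)) := by gcongr
      _ = 3 ^ (w.cons hxz).length * (|x.val.1| + |x.val.2| + 1) := by
        rw [Walk.length_cons, pow_succ]; ring

theorem finite_ball {ι : IdentAssignment} (hι : (IMC ι).Preconnected) (x : Cell) (r : ℕ) :
    (ball ι x r).Finite := by
  set B : ℤ := 3 ^ r * (|x.val.1| + |x.val.2| + 1)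
  refine (((Set.finite_Icc (-B) B).prod (Set.finite_Icc (-B) B)).preimage
    Subtype.val_injective.injOn).subset fun y hy => ?_
  obtain ⟨w, hw⟩ := (hι x y).exists_walk_length_eq_dist
  have hlen : 3 ^ w.length ≤ (3 : ℤ) ^ r :=
    pow_le_pow_right₀ (by norm_num) (hw ▸ (le_of_lt hy : (IMC ι).dist x y ≤ r))
  have hy := (abs_add_abs_le_of_walk w).trans (mul_le_mul_of_nonneg_right hlen (by positivity))
  have := abs_nonneg y.val.1
  have := abs_nonneg y.val.2
  simp only [Set.mem_preimage, Set.mem_prod, Set.mem_Icc, ← abs_le]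
  constructor <;> linarith

def cornerOffset (m : ℕ) (h : Bool) : ℤ := if h then 3 ^ m - 1 else 0

def cornerPt (m : ℕ) (C : ℤ × ℤ) (h v : Bool) : ℤ × ℤ :=
  (C.1 * 3 ^ m + cornerOffset m h, C.2 * 3 ^ m + cornerOffset m v)

theorem cornerPt_zero (C : ℤ × ℤ) (h v : Bool) : cornerPt 0 C h v = C := by
  cases h <;> cases v <;> simp [cornerPt, cornerOffset]

theorem cornerPt_succ (m : ℕ) (C : ℤ × ℤ) (h v : Bool) :
    cornerPt (m + 1) C h v = cornerPt m (3 * C.1 + side h, 3 * C.2 + side v) h v := by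
  cases h <;> cases v <;> simp only [cornerPt, cornerOffset, side, pow_succ] <;> ext <;> simp <;>
    ring

theorem isCell_cornerPt {m : ℕ} {C : ℤ × ℤ} (hC : IsCell C) (h v : Bool) :
    IsCell (cornerPt m C h v) := by
  induction m generalizing C with
  | zero => rwa [cornerPt_zero]
  | succ m ih =>
    rw [cornerPt_succ]
    exact ih (subCopy ⟨C, hC⟩ (.corner h v)).2

def corner (m : ℕ) (C : Cell) (h v : Bool) : Cell :=
  ⟨cornerPt m C.val h v, isCell_cornerPt C.2 h v⟩

theorem corner_zero (C : Cell) (h v : Bool) : corner 0 C h v = C :=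
  Subtype.ext (cornerPt_zero _ h v)

theorem corner_succ (m : ℕ) (C : Cell) (h v : Bool) :
    corner (m + 1) C h v = corner m (subCopy C (.corner h v)) h v :=
  Subtype.ext (cornerPt_succ m C.val h v)

section Adjacency

variable {ι : IdentAssignment} {m : ℕ}

theorem adj_of_abs_add_abs_eq_one {u w : Cell}
    (h : |u.val.1 - w.val.1| + |u.val.2 - w.val.2| = 1) : (IMC ι).Adj u w :=
  ⟨u.2, w.2, fun he => by simp [he] at h, Or.inl h⟩

theorem adj_of_holeAdjH {u w : Cell} (h : HoleAdjH ι u.val w.val) : (IMC ι).Adj u w := by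
  refine ⟨u.2, w.2, fun he => ?_, Or.inr (Or.inl h)⟩
  obtain ⟨s, a, b, -, h₁, h₂, -⟩ := h
  have : (0 : ℤ) < 3 ^ s := by positivity
  rw [he] at h₁
  omega

theorem adj_of_holeAdjV {u w : Cell} (h : HoleAdjV ι u.val w.val) : (IMC ι).Adj u w := by
  refine ⟨u.2, w.2, fun he => ?_, Or.inr (Or.inr (Or.inr (Or.inl h)))⟩
  obtain ⟨s, a, b, -, h₁, h₂, -⟩ := h
  have : (0 : ℤ) < 3 ^ s := by positivity
  rw [he] at h₁
  omega

theorem reachable_of_abs_add_abs_le_one {u w : Cell}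
    (h : |u.val.1 - w.val.1| + |u.val.2 - w.val.2| ≤ 1) : (IMC ι).Reachable u w := by
  rcases eq_or_ne u w with rfl | hne
  · rfl
  refine (adj_of_abs_add_abs_eq_one (le_antisymm h ?_)).reachable
  have h₁ := abs_nonneg (u.val.1 - w.val.1)
  have h₂ := abs_nonneg (u.val.2 - w.val.2)
  by_cases e₁ : u.val.1 = w.val.1
  · have e₂ : u.val.2 ≠ w.val.2 := fun e₂ => hne (Subtype.ext (Prod.ext e₁ e₂))
    linarith [abs_pos.mpr (sub_ne_zero.mpr e₂)]
  · linarith [abs_pos.mpr (sub_ne_zero.mpr e₁)]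

theorem adj_corner_up {D D' : Cell} (hD : D'.val = (D.val.1, D.val.2 + 1)) (h : Bool) :
    (IMC ι).Adj (corner m D h true) (corner m D' h false) := by
  apply adj_of_abs_add_abs_eq_one
  simp only [corner, cornerPt, cornerOffset, hD]
  cases h <;> simp <;> ring_nf <;> simp

theorem adj_corner_right {D D' : Cell} (hD : D'.val = (D.val.1 + 1, D.val.2)) (v : Bool) :
    (IMC ι).Adj (corner m D true v) (corner m D' false v) := by
  apply adj_of_abs_add_abs_eq_one
  simp only [corner, cornerPt, cornerOffset, hD]
  cases v <;> simp <;> ring_nf <;> simp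

theorem adj_subCopy_corner_midRow (C : Cell) (h h' v : Bool) :
    (IMC ι).Adj (corner m (subCopy C (.corner h v)) h' (!v))
      (corner m (subCopy C (.midRow h)) h' v) := by
  cases v
  · exact adj_corner_up (by simp [subCopy, SubPos.digits, side]) h'
  · exact (adj_corner_up (by simp [subCopy, SubPos.digits, side]; ring) h').symm

theorem adj_subCopy_corner_midCol (C : Cell) (h v v' : Bool) :
    (IMC ι).Adj (corner m (subCopy C (.corner h v)) (!h) v')
      (corner m (subCopy C (.midCol v)) h v') := by
  cases h
  · exact adj_corner_right (by simp [subCopy, SubPos.digits, side]) v'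
  · exact (adj_corner_right (by simp [subCopy, SubPos.digits, side]; ring) v').symm

end Adjacency

abbrev projCarpet : SimpleGraph Cell := IMC (uniform IdentType.proj)

theorem adj_subCopy_midRow_cross {m : ℕ} (C : Cell) (h v : Bool) :
    projCarpet.Adj (corner m (subCopy C (.midRow h)) (!h) v)
      (corner m (subCopy C (.midRow (!h))) h (!v)) := by
  suffices key : ∀ v, projCarpet.Adj (corner m (subCopy C (.midRow false)) true v)
      (corner m (subCopy C (.midRow true)) false (!v)) by
    cases h
    · exact key v
    · simpa using (key (!v)).symm
  intro v
  apply adj_of_holeAdjH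
  refine ⟨m, C.val.1, C.val.2, C.2, ?_, ?_, ?_, ?_, ?_⟩ <;>
    cases v <;> simp [corner, cornerPt, cornerOffset, subCopy, SubPos.digits, side, uniform,
      flipH, pow_succ] <;> linarith [(by positivity : (0 : ℤ) < 3 ^ m)]

theorem adj_subCopy_midCol_cross {m : ℕ} (C : Cell) (h v : Bool) :
    projCarpet.Adj (corner m (subCopy C (.midCol v)) h (!v))
      (corner m (subCopy C (.midCol (!v))) (!h) v) := by
  suffices key : ∀ h, projCarpet.Adj (corner m (subCopy C (.midCol false)) h true)
      (corner m (subCopy C (.midCol true)) (!h) false) by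
    cases v
    · exact key h
    · simpa using (key (!h)).symm
  intro h
  apply adj_of_holeAdjV
  refine ⟨m, C.val.1, C.val.2, C.2, ?_, ?_, ?_, ?_, ?_⟩ <;>
    cases h <;> simp [corner, cornerPt, cornerOffset, subCopy, SubPos.digits, side, uniform,
      flipV, pow_succ] <;> linarith [(by positivity : (0 : ℤ) < 3 ^ m)]

/-- The bounds solve `d (m + 1) = 2 d m + 3` and `e (m + 1) = 2 d m + e m + 3`, the lengths of
the routes in `diag_succ`, `horiz_succ` and `vert_succ`. -/
structure CornerBounds (m : ℕ) : Prop where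
  diag : ∀ C h v, projCarpet.edist (corner m C h v) (corner m C (!h) (!v)) ≤ (3 * 2 ^ m - 3 : ℕ)
  horiz : ∀ C h v, projCarpet.edist (corner m C h v) (corner m C (!h) v) ≤ (6 * 2 ^ m - 6 : ℕ)
  vert : ∀ C h v, projCarpet.edist (corner m C h v) (corner m C h (!v)) ≤ (6 * 2 ^ m - 6 : ℕ)

theorem cornerBounds_zero : CornerBounds 0 where
  diag C h v := by simp [corner_zero]
  horiz C h v := by simp [corner_zero]
  vert C h v := by simp [corner_zero]

namespace CornerBounds

theorem diag_succ {m : ℕ} (H : CornerBounds m) (C : Cell) (h v : Bool) :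
    projCarpet.edist (corner (m + 1) C h v) (corner (m + 1) C (!h) (!v)) ≤
      (3 * 2 ^ (m + 1) - 3 : ℕ) := by
  suffices route : ∀ h, projCarpet.edist (corner (m + 1) C h false)
      (corner (m + 1) C (!h) true) ≤ (3 * 2 ^ (m + 1) - 3 : ℕ) by
    cases v
    · exact route h
    · simpa [edist_comm] using route (!h)
  intro h
  rw [corner_succ, corner_succ]
  refine (edist_le_add_of_le (edist_le_add_of_le (edist_le_add_of_le (edist_le_add_of_le
    (H.diag (subCopy C (.corner h false)) h false)
    (edist_le_one_of_adj (adj_subCopy_corner_midRow C h (!h) false)))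
    (edist_le_one_of_adj (adj_subCopy_midRow_cross C h false)))
    (edist_le_one_of_adj (adj_subCopy_corner_midRow C (!h) h true).symm))
    (H.diag (subCopy C (.corner (!h) true)) h false)).trans ?_
  have := m.one_le_two_pow
  exact Nat.cast_le.mpr (by rw [pow_succ]; omega)

theorem horiz_succ {m : ℕ} (H : CornerBounds m) (C : Cell) (h v : Bool) :
    projCarpet.edist (corner (m + 1) C h v) (corner (m + 1) C (!h) v) ≤
      (6 * 2 ^ (m + 1) - 6 : ℕ) := by
  suffices route : ∀ v, projCarpet.edist (corner (m + 1) C false v)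
      (corner (m + 1) C true v) ≤ (6 * 2 ^ (m + 1) - 6 : ℕ) by
    cases h
    · exact route v
    · simpa [edist_comm] using route v
  intro v
  rw [corner_succ, corner_succ]
  refine (edist_le_add_of_le (edist_le_add_of_le (edist_le_add_of_le (edist_le_add_of_le
    (edist_le_add_of_le
    (H.diag (subCopy C (.corner false v)) false v)
    (edist_le_one_of_adj (adj_subCopy_corner_midRow C false true v)))
    (edist_le_one_of_adj (adj_subCopy_midRow_cross C false v)))
    (by simpa only [Bool.not_not, Bool.not_false] using
      H.diag (subCopy C (.midRow true)) false (!v)))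
    (edist_le_one_of_adj (adj_subCopy_corner_midRow C true true v).symm))
    (by simpa only [Bool.not_not] using H.vert (subCopy C (.corner true v)) true (!v))).trans ?_
  have := m.one_le_two_pow
  exact Nat.cast_le.mpr (by rw [pow_succ]; omega)

theorem vert_succ {m : ℕ} (H : CornerBounds m) (C : Cell) (h v : Bool) :
    projCarpet.edist (corner (m + 1) C h v) (corner (m + 1) C h (!v)) ≤
      (6 * 2 ^ (m + 1) - 6 : ℕ) := by
  suffices route : ∀ h, projCarpet.edist (corner (m + 1) C h false)
      (corner (m + 1) C h true) ≤ (6 * 2 ^ (m + 1) - 6 : ℕ) by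
    cases v
    · exact route h
    · simpa [edist_comm] using route h
  intro h
  rw [corner_succ, corner_succ]
  refine (edist_le_add_of_le (edist_le_add_of_le (edist_le_add_of_le (edist_le_add_of_le
    (edist_le_add_of_le
    (H.diag (subCopy C (.corner h false)) h false)
    (edist_le_one_of_adj (adj_subCopy_corner_midCol C h false true)))
    (edist_le_one_of_adj (adj_subCopy_midCol_cross C h false)))
    (by simpa only [Bool.not_not, Bool.not_false] using
      H.diag (subCopy C (.midCol true)) (!h) false))
    (edist_le_one_of_adj (adj_subCopy_corner_midCol C h true true).symm))
    (by simpa only [Bool.not_not] using H.horiz (subCopy C (.corner h true)) (!h) true)).trans ?_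
  have := m.one_le_two_pow
  exact Nat.cast_le.mpr (by rw [pow_succ]; omega)

theorem succ {m : ℕ} (H : CornerBounds m) : CornerBounds (m + 1) :=
  ⟨H.diag_succ, H.horiz_succ, H.vert_succ⟩

end CornerBounds

theorem cornerBounds (m : ℕ) : CornerBounds m := by
  induction m with
  | zero => exact cornerBounds_zero
  | succ m H => exact H.succ

theorem edist_corner_le (m : ℕ) (C : Cell) (h v h' v' : Bool) :
    projCarpet.edist (corner m C h v) (corner m C h' v') ≤ (6 * 2 ^ m - 6 : ℕ) := by
  have H := cornerBounds m
  have := m.one_le_two_pow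
  obtain rfl | rfl := Bool.eq_or_eq_not h' h <;> obtain rfl | rfl := Bool.eq_or_eq_not v' v
  · simp
  · exact H.vert C h' v
  · exact H.horiz C h v'
  · exact (H.diag C h v).trans (Nat.cast_le.mpr (by omega))

theorem edist_corner_copy_le (m : ℕ) (u : Cell) (h v : Bool) :
    projCarpet.edist u (corner m (copy m u) h v) ≤ (18 * 2 ^ m : ℕ) := by
  induction m generalizing h v with
  | zero => simp [copy_zero, corner_zero]
  | succ m ih =>
    obtain ⟨t, ht⟩ := exists_copy_eq_subCopy m u
    rw [ht] at ih
    obtain ⟨h₀, v₀, hu⟩ : ∃ h₀ v₀, projCarpet.edist u (corner (m + 1) (copy (m + 1) u) h₀ v₀) ≤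
        (18 * 2 ^ m + 1 + (6 * 2 ^ m - 6) : ℕ) := by
      simp only [corner_succ]
      cases t with
      | corner h₀ v₀ => exact ⟨h₀, v₀, (ih h₀ v₀).trans (Nat.cast_le.mpr (by omega))⟩
      | midCol v₀ =>
        exact ⟨false, v₀, edist_le_add_of_le (edist_le_add_of_le (ih false v₀)
          (edist_le_one_of_adj (adj_subCopy_corner_midCol _ false v₀ v₀).symm))
          ((cornerBounds m).horiz _ true v₀)⟩
      | midRow h₀ =>
        exact ⟨h₀, false, edist_le_add_of_le (edist_le_add_of_le (ih h₀ false)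
          (edist_le_one_of_adj (adj_subCopy_corner_midRow _ h₀ h₀ false).symm))
          ((cornerBounds m).vert _ h₀ true)⟩
    refine (edist_le_add_of_le hu (edist_corner_le (m + 1) _ h₀ v₀ h v)).trans ?_
    have := m.one_le_two_pow
    exact Nat.cast_le.mpr (by rw [pow_succ]; omega)

theorem edist_le_of_copy_eq {m : ℕ} {x y : Cell} (h : copy m x = copy m y) :
    projCarpet.edist x y ≤ (36 * 2 ^ m : ℕ) := by
  have hy := edist_corner_copy_le m y false false
  rw [← h, edist_comm] at hy
  exact (edist_le_add_of_le (edist_corner_copy_le m x false false) hy).trans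
    (Nat.cast_le.mpr (by omega))

theorem ediv_three_pow_eq_zero_or_neg_one {n : ℕ} {i : ℤ} (hi : |i| < 3 ^ n) :
    i / 3 ^ n = 0 ∨ i / 3 ^ n = -1 := by
  have h3 : (0 : ℤ) < 3 ^ n := by positivity
  have h₁ := (Int.le_ediv_iff_mul_le h3 (a := -1) (b := i)).mpr (by linarith [neg_abs_le i])
  have h₂ := (Int.ediv_lt_iff_lt_mul h3 (a := i) (b := 1)).mpr (by linarith [le_abs_self i])
  omega

theorem ediv_three_pow_eq_self {n : ℕ} {i : ℤ} (hi : i = 0 ∨ i = -1) : i / 3 ^ n = i := by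
  have h3 : (0 : ℤ) < 3 ^ n := by positivity
  rcases hi with rfl | rfl
  · simp
  · exact (Int.ediv_eq_iff_of_pos h3).mpr ⟨by linarith, by linarith⟩

def origin : Cell := ⟨(0, 0), isCell_zero_fst 0⟩

/-- Far enough up, the copy containing `u` is one of the four copies meeting at the origin, and as
a cell of the carpet it lies in that copy and next to `origin`. -/
theorem reachable_origin (u : Cell) : projCarpet.Reachable u origin := by
  set n := u.val.1.natAbs + u.val.2.natAbs
  have hn : (n : ℤ) < 3 ^ n := by exact_mod_cast Nat.lt_pow_self (by norm_num)
  have hC₁ : u.val.1 / 3 ^ n = 0 ∨ u.val.1 / 3 ^ n = -1 :=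
    ediv_three_pow_eq_zero_or_neg_one (by rw [Int.abs_eq_natAbs]; omega)
  have hC₂ : u.val.2 / 3 ^ n = 0 ∨ u.val.2 / 3 ^ n = -1 :=
    ediv_three_pow_eq_zero_or_neg_one (by rw [Int.abs_eq_natAbs]; omega)
  set C := copy n u
  have hCC : copy n C = C := by
    refine Subtype.ext (Prod.ext ?_ ?_) <;> simp only [C, copy, copyOf, ← Int.div_def]
    exacts [ediv_three_pow_eq_self hC₁, ediv_three_pow_eq_self hC₂]
  have huC : projCarpet.Reachable u C :=
    reachable_of_edist_ne_top (ne_top_of_le_ne_top (ENat.natCast_ne_top _)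
      (edist_le_of_copy_eq hCC.symm))
  let D : Cell := ⟨(0, C.val.2), isCell_zero_fst _⟩
  refine huC.trans ((reachable_of_abs_add_abs_le_one (w := D) ?_).trans
    (reachable_of_abs_add_abs_le_one ?_))
  · rcases hC₁ with h | h <;> simp [C, D, copy, copyOf, ← Int.div_def, h]
  · rcases hC₂ with h | h <;> simp [C, D, origin, copy, copyOf, ← Int.div_def, h]

theorem preconnected_projCarpet : projCarpet.Preconnected := fun u w =>
  (reachable_origin u).trans (reachable_origin w).symm

/-- With projective plane identifications, for every cell `x` of the
infinite magic carpet there exists `M` such that for all `m ≥ M`,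
`#B(x, m·2^m) ≥ 8^m`. -/
theorem ball_card_lower_bound_proj (x : Cell) :
    ∃ M : ℕ, ∀ m : ℕ, M ≤ m →
      8 ^ m ≤ (ball (uniform IdentType.proj) x (m * 2 ^ m)).ncard := by
  refine ⟨37, fun m hm => ?_⟩
  obtain ⟨s, hcard, hs⟩ := exists_finset_copy_eq m (copy m x)
  have hsub : (s : Set Cell) ⊆ ball (uniform IdentType.proj) x (m * 2 ^ m) := fun y hy =>
    calc projCarpet.dist x y ≤ 36 * 2 ^ m :=
          dist_le_of_edist_le (edist_le_of_copy_eq (hs y hy).symm)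
      _ < m * 2 ^ m := Nat.mul_lt_mul_of_pos_right (by omega) (by positivity)
  calc 8 ^ m = (s : Set Cell).ncard := by rw [Set.ncard_coe_finset, hcard]
    _ ≤ _ := Set.ncard_le_ncard hsub (finite_ball preconnected_projCarpet x _)

end MagicCarpet
end

section
/- Fix any identification type (torus, Klein bottle, or projective plane). Any path of successively adjacent cells that is contained entirely in a copy of V_m inside IMC, begins at a cell on one m-edge of that copy, and ends at a cell on the opposite m-edge of that copy, has at least 2^m − 1 steps; consequently a path inside a copy of V_m with at most 2^m − 1 steps that begins along one m-edge of the copy cannot leave the copy along the opposite m-edge. -/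
/-!
Magic carpets (Sierpinski carpet with torus / Klein bottle / projective plane
identifications of the sides of the vacant squares), following
"Analysis on the projective octagasket and other fractafolds" setup of the paper
"Magic carpets" (Goodman–Siu–Strichartz et al.).

Cells of the infinite blowup are indexed by their lower-left corners in `ℤ × ℤ`
(in units where every cell is a unit square).  A lattice square is a cell iff no
base-3 digit position carries the digit `1` in both coordinates simultaneously.
The vacant square ("hole") of level `s` at block `(a, b)` is the middle ninth of
the level-`(s+1)` block with block coordinates `(a, b)`, i.e. the square
`[a·3^(s+1)+3^s, a·3^(s+1)+2·3^s) × [b·3^(s+1)+3^s, b·3^(s+1)+2·3^s)`; it is a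
genuine vacant square of the carpet iff `(a,b)` itself satisfies the cell
condition.  Opposite sides of each vacant square are identified according to the
chosen identification type; orientation-reversal of a pair of sides reverses the
transverse coordinate.
-/

namespace MagicCarpet

/-!
A path inside a copy of `V_m` moves each coordinate of its cell, relative to the copy, by a
unit step, by a jump across a vacant square of level `s < m`, or by the reflection of the
transverse coordinate across such a square. The integer Cantor function `cantor m`, which is
`0` at `0`, `2^m - 1` at `3^m - 1`, and constant on each vacant square together with the row
(or column) just before it, changes by at most one under every such move. Hence it is
`1`-Lipschitz along paths in the copy, and crossing from one `m`-edge to the opposite one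
costs at least `2^m - 1` steps.
-/

/-- The Cantor function on `[0, 3^m)`, scaled to take the values `0, …, 2^m - 1`. -/
def cantor : ℕ → ℤ → ℤ
  | 0, _ => 0
  | m + 1, x =>
    if x < 3 ^ m then cantor m x
    else if x < 2 * 3 ^ m then 2 ^ m - 1
    else 2 ^ m + cantor m (x - 2 * 3 ^ m)

section Cantor

variable {m : ℕ} {x y : ℤ}

lemma cantor_succ_of_lt (h : x < 3 ^ m) : cantor (m + 1) x = cantor m x := by
  simp only [cantor, if_pos h]

lemma cantor_succ_of_mem_Ico (h₁ : 3 ^ m ≤ x) (h₂ : x < 2 * 3 ^ m) :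
    cantor (m + 1) x = 2 ^ m - 1 := by
  simp only [cantor, if_neg (not_lt.mpr h₁), if_pos h₂]

lemma cantor_succ_of_le (h : 2 * 3 ^ m ≤ x) :
    cantor (m + 1) x = 2 ^ m + cantor m (x - 2 * 3 ^ m) := by
  have : (0 : ℤ) < 3 ^ m := by positivity
  simp only [cantor, if_neg (show ¬x < 3 ^ m by linarith), if_neg (not_lt.mpr h)]

@[simp]
lemma cantor_zero_right : ∀ m : ℕ, cantor m 0 = 0
  | 0 => rfl
  | m + 1 => by rw [cantor_succ_of_lt (by positivity), cantor_zero_right m]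

lemma cantor_pow_sub_one : ∀ m : ℕ, cantor m (3 ^ m - 1) = 2 ^ m - 1
  | 0 => rfl
  | m + 1 => by
    have : (0 : ℤ) < 3 ^ m := by positivity
    rw [cantor_succ_of_le (by rw [pow_succ]; linarith),
      show (3 : ℤ) ^ (m + 1) - 1 - 2 * 3 ^ m = 3 ^ m - 1 by ring, cantor_pow_sub_one m]
    ring

lemma cantor_mul_add_one_sub_one (b : ℤ) :
    cantor m ((b + 1) * 3 ^ m - 1 - b * 3 ^ m) = 2 ^ m - 1 := by
  rw [show (b + 1) * 3 ^ m - 1 - b * 3 ^ m = 3 ^ m - 1 by ring, cantor_pow_sub_one]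

lemma cantor_succ_mem_Icc (h₁ : 3 ^ m - 1 ≤ x) (h₂ : x ≤ 2 * 3 ^ m) :
    2 ^ m - 1 ≤ cantor (m + 1) x ∧ cantor (m + 1) x ≤ 2 ^ m := by
  rcases h₁.eq_or_lt with rfl | h₁
  · rw [cantor_succ_of_lt (by linarith), cantor_pow_sub_one]
    omega
  rcases h₂.lt_or_eq with h₂ | rfl
  · rw [cantor_succ_of_mem_Ico (by linarith) h₂]
    omega
  · rw [cantor_succ_of_le le_rfl, sub_self, cantor_zero_right]
    omega

end Cantor

/-- The moves of one coordinate of a cell when a path crosses the vacant square of level `s`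
in the block of size `3^(s+1)` starting at `c`: the jump from the column (or row) just before
the square to the one just after it, and the reflection of the transverse coordinate. -/
def HoleMove (s : ℕ) (c x y : ℤ) : Prop :=
  (x = c + 3 ^ s - 1 ∧ y = c + 2 * 3 ^ s) ∨
    (c + 3 ^ s ≤ x ∧ x < c + 2 * 3 ^ s ∧ y = 2 * (c + 3 ^ s) + 3 ^ s - 1 - x)

/-- The moves of one coordinate, relative to the copy, along a path inside a copy of `V_m`. -/
def CoordMove (m : ℕ) (x y : ℤ) : Prop :=
  |x - y| ≤ 1 ∨ ∃ s < m, ∃ c, 3 ^ (s + 1) ∣ c ∧ (HoleMove s c x y ∨ HoleMove s c y x)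

section Moves

variable {m s : ℕ} {c x y : ℤ}

lemma HoleMove.mem_Icc (h : HoleMove s c x y) :
    c + 3 ^ s - 1 ≤ x ∧ x ≤ c + 2 * 3 ^ s ∧ c + 3 ^ s - 1 ≤ y ∧ y ≤ c + 2 * 3 ^ s := by
  have : (0 : ℤ) < 3 ^ s := by positivity
  rcases h with ⟨rfl, rfl⟩ | ⟨h₁, h₂, rfl⟩ <;> omega

lemma HoleMove.sub (h : HoleMove s c x y) (t : ℤ) : HoleMove s (c - t) (x - t) (y - t) := by
  rcases h with ⟨rfl, rfl⟩ | ⟨h₁, h₂, rfl⟩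
  · left; constructor <;> ring
  · right; refine ⟨by linarith, by linarith, by ring⟩

lemma CoordMove.symm (h : CoordMove m x y) : CoordMove m y x := by
  rcases h with h | ⟨s, hs, c, hc, h⟩
  · left; rwa [abs_sub_comm]
  · exact Or.inr ⟨s, hs, c, hc, h.symm⟩

lemma CoordMove.sub (h : CoordMove m x y) {t : ℤ} (ht : 3 ^ m ∣ t) :
    CoordMove m (x - t) (y - t) := by
  rcases h with h | ⟨s, hs, c, hc, h⟩
  · left; rwa [sub_sub_sub_cancel_right]
  · have ht' : 3 ^ (s + 1) ∣ t := (pow_dvd_pow 3 hs).trans ht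
    exact Or.inr ⟨s, hs, c - t, dvd_sub hc ht', h.imp (·.sub t) (·.sub t)⟩

lemma block_not_straddle {d c K x : ℤ} (hc : d ∣ c) (hK : d ∣ K) (h₁ : c ≤ x) (h₂ : x < c + d) :
    (x < K → c + d ≤ K) ∧ (K ≤ x → K ≤ c) := by
  constructor
  · intro hx
    linarith [Int.le_of_dvd (by linarith) (dvd_sub hK hc)]
  · intro hx
    have := Int.le_of_dvd (by linarith) (dvd_sub (dvd_add hc dvd_rfl) hK)
    linarith

lemma HoleMove.succ_cases (h : HoleMove s c x y) (hs : s < m + 1) (hc : 3 ^ (s + 1) ∣ c)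
    (hx₀ : 0 ≤ x) (hx : x < 3 ^ (m + 1)) :
    (x < 3 ^ m ∧ y < 3 ^ m ∧ CoordMove m x y) ∨
      (2 * 3 ^ m ≤ x ∧ 2 * 3 ^ m ≤ y ∧ CoordMove m (x - 2 * 3 ^ m) (y - 2 * 3 ^ m)) ∨
      (3 ^ m - 1 ≤ x ∧ x ≤ 2 * 3 ^ m ∧ 3 ^ m - 1 ≤ y ∧ y ≤ 2 * 3 ^ m) := by
  obtain ⟨hx₁, hx₂, hy₁, hy₂⟩ := h.mem_Icc
  have h3s : (0 : ℤ) < 3 ^ s := by positivity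
  have hblock : (3 : ℤ) ^ (s + 1) = 3 * 3 ^ s := by rw [pow_succ, mul_comm]
  rcases Nat.lt_succ_iff_lt_or_eq.mp hs with hs | rfl
  · have hdvd : (3 : ℤ) ^ (s + 1) ∣ 3 ^ m := pow_dvd_pow 3 hs
    have hN₁ := block_not_straddle hc hdvd (x := x) (by linarith) (by linarith)
    have hN₂ := block_not_straddle hc (dvd_mul_of_dvd_right hdvd 2) (x := x) (by linarith)
      (by linarith)
    have hmove : CoordMove m x y := Or.inr ⟨s, hs, c, hc, Or.inl h⟩
    by_cases hxN : x < 3 ^ m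
    · exact Or.inl ⟨hxN, by linarith [hN₁.1 hxN], hmove⟩
    by_cases hx2N : 2 * 3 ^ m ≤ x
    · exact Or.inr (Or.inl ⟨hx2N, by linarith [hN₂.2 hx2N], hmove.sub (dvd_mul_left _ _)⟩)
    · right; right
      have := hN₁.2 (by linarith)
      have := hN₂.1 (by linarith)
      omega
  · have hc0 : c = 0 := Int.eq_zero_of_abs_lt_dvd hc (by rw [abs_lt]; constructor <;> linarith)
    subst hc0
    right; right; omega

/-- `cantor (m + 1)` is `cantor m` on the first third of `[0, 3^(m+1))`, `2^m + cantor m` on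
the last one, and takes only the values `2^m - 1` and `2^m` on the middle third extended by one
cell on each side; a move at level `m + 1` stays within one of these three ranges. -/
lemma CoordMove.succ_cases (h : CoordMove (m + 1) x y) (hx₀ : 0 ≤ x) (hx : x < 3 ^ (m + 1))
    (hy₀ : 0 ≤ y) (hy : y < 3 ^ (m + 1)) :
    (x < 3 ^ m ∧ y < 3 ^ m ∧ CoordMove m x y) ∨
      (2 * 3 ^ m ≤ x ∧ 2 * 3 ^ m ≤ y ∧ CoordMove m (x - 2 * 3 ^ m) (y - 2 * 3 ^ m)) ∨
      (3 ^ m - 1 ≤ x ∧ x ≤ 2 * 3 ^ m ∧ 3 ^ m - 1 ≤ y ∧ y ≤ 2 * 3 ^ m) := by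
  rcases h with h | ⟨s, hs, c, hc, hxy | hyx⟩
  · have hunit : CoordMove m x y := Or.inl h
    rw [abs_le] at h
    rw [pow_succ] at hx hy
    by_cases hxN : x < 3 ^ m ∧ y < 3 ^ m
    · exact Or.inl ⟨hxN.1, hxN.2, hunit⟩
    by_cases hx2N : 2 * 3 ^ m ≤ x ∧ 2 * 3 ^ m ≤ y
    · exact Or.inr (Or.inl ⟨hx2N.1, hx2N.2, hunit.sub (dvd_mul_left _ _)⟩)
    · right; right; omega
  · exact hxy.succ_cases hs hc hx₀ hx
  · rcases hyx.succ_cases hs hc hy₀ hy with ⟨h₁, h₂, h₃⟩ | ⟨h₁, h₂, h₃⟩ | h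
    · exact Or.inl ⟨h₂, h₁, h₃.symm⟩
    · exact Or.inr (Or.inl ⟨h₂, h₁, h₃.symm⟩)
    · right; right; omega

theorem abs_cantor_sub_le_one (h : CoordMove m x y) (hx₀ : 0 ≤ x) (hx : x < 3 ^ m)
    (hy₀ : 0 ≤ y) (hy : y < 3 ^ m) : |cantor m x - cantor m y| ≤ 1 := by
  induction m generalizing x y with
  | zero => simp [cantor]
  | succ m ih =>
    have h3N : (3 : ℤ) ^ (m + 1) = 3 * 3 ^ m := by rw [pow_succ, mul_comm]
    rcases h.succ_cases hx₀ hx hy₀ hy with ⟨hx', hy', h⟩ | ⟨hx', hy', h⟩ | ⟨hx₁, hx₂, hy₁, hy₂⟩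
    · rw [cantor_succ_of_lt hx', cantor_succ_of_lt hy']
      exact ih h hx₀ hx' hy₀ hy'
    · rw [cantor_succ_of_le hx', cantor_succ_of_le hy', add_sub_add_left_eq_sub]
      exact ih h (by linarith) (by linarith) (by linarith) (by linarith)
    · have := cantor_succ_mem_Icc hx₁ hx₂
      have := cantor_succ_mem_Icc hy₁ hy₂
      rw [abs_le]; constructor <;> linarith

end Moves

theorem _root_.SimpleGraph.Walk.abs_sub_le_length {V : Type*} {G : SimpleGraph V}
    (P : V → Prop) (φ : V → ℤ) (hφ : ∀ u v, P u → P v → G.Adj u v → |φ u - φ v| ≤ 1) :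
    ∀ {x y : V} (w : G.Walk x y), (∀ v ∈ w.support, P v) → |φ x - φ y| ≤ w.length
  | _, _, .nil, _ => by simp
  | x, y, .cons (v := v) hadj w, hw => by
    simp only [SimpleGraph.Walk.support_cons, List.mem_cons, forall_eq_or_imp] at hw
    have hstep := hφ x v hw.1 (hw.2 v w.start_mem_support) hadj
    have hrest := SimpleGraph.Walk.abs_sub_le_length P φ hφ w hw.2
    rw [SimpleGraph.Walk.length_cons, Nat.cast_succ]
    linarith [abs_sub_le (φ x) (φ v) (φ y)]

section Copies

variable {m : ℕ} {C : ℤ × ℤ}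

lemma InCopy.sub_bounds {p : Cell} (h : InCopy m C p) :
    0 ≤ p.val.1 - C.1 * 3 ^ m ∧ p.val.1 - C.1 * 3 ^ m < 3 ^ m ∧
      0 ≤ p.val.2 - C.2 * 3 ^ m ∧ p.val.2 - C.2 * 3 ^ m < 3 ^ m := by
  have hN : (0 : ℤ) < 3 ^ m := by positivity
  obtain ⟨h₁, h₂⟩ := Prod.ext_iff.mp h
  change p.val.1 / 3 ^ m = C.1 at h₁
  change p.val.2 / 3 ^ m = C.2 at h₂
  have := Int.ediv_mul_le p.val.1 hN.ne'
  have := Int.lt_ediv_add_one_mul_self p.val.1 hN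
  have := Int.ediv_mul_le p.val.2 hN.ne'
  have := Int.lt_ediv_add_one_mul_self p.val.2 hN
  rw [← h₁, ← h₂]
  refine ⟨?_, ?_, ?_, ?_⟩ <;> linarith

lemma coordMove_of_gluing {s : ℕ} {a b x₁ y₁ x₂ y₂ e₁ e₂ : ℤ} {f : Bool}
    (he₁ : 3 ^ m ∣ e₁) (he₂ : 3 ^ m ∣ e₂)
    (hx₁ : x₁ = a * 3 ^ (s + 1) + 3 ^ s - 1) (hy₁ : y₁ = a * 3 ^ (s + 1) + 2 * 3 ^ s)
    (hx₂ : b * 3 ^ (s + 1) + 3 ^ s ≤ x₂) (hx₂' : x₂ < b * 3 ^ (s + 1) + 2 * 3 ^ s)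
    (hy₂ : y₂ = if f then 2 * (b * 3 ^ (s + 1) + 3 ^ s) + 3 ^ s - 1 - x₂ else x₂)
    (hbound₁ : e₁ ≤ x₁) (hbound₁' : y₁ < e₁ + 3 ^ m) :
    CoordMove m (x₁ - e₁) (y₁ - e₁) ∧ CoordMove m (x₂ - e₂) (y₂ - e₂) := by
  have hs : s < m := by
    rw [← pow_lt_pow_iff_right₀ (show (1 : ℤ) < 3 by norm_num)]
    linarith
  refine ⟨CoordMove.sub (Or.inr ⟨s, hs, _, dvd_mul_left _ _, Or.inl (Or.inl ⟨hx₁, hy₁⟩)⟩) he₁,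
    CoordMove.sub ?_ he₂⟩
  cases f
  · left; simp [hy₂]
  · exact Or.inr ⟨s, hs, _, dvd_mul_left _ _, Or.inl (Or.inr ⟨hx₂, hx₂', hy₂⟩)⟩

lemma coordMove_of_adj {ι : IdentAssignment} {u v : Cell} (h : (IMC ι).Adj u v)
    (hu : InCopy m C u) (hv : InCopy m C v) :
    CoordMove m (u.val.1 - C.1 * 3 ^ m) (v.val.1 - C.1 * 3 ^ m) ∧
      CoordMove m (u.val.2 - C.2 * 3 ^ m) (v.val.2 - C.2 * 3 ^ m) := by
  obtain ⟨hu₁, hu₁', hu₂, hu₂'⟩ := hu.sub_bounds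
  obtain ⟨hv₁, hv₁', hv₂, hv₂'⟩ := hv.sub_bounds
  have hd₁ : 3 ^ m ∣ C.1 * 3 ^ m := dvd_mul_left _ _
  have hd₂ : 3 ^ m ∣ C.2 * 3 ^ m := dvd_mul_left _ _
  obtain ⟨-, -, -, h | h | h | h | h⟩ := h
  · constructor <;> left <;> rw [sub_sub_sub_cancel_right] <;>
      linarith [abs_nonneg (u.val.1 - v.val.1), abs_nonneg (u.val.2 - v.val.2)]
  · obtain ⟨s, a, b, -, h₁, h₂, h₃, h₄, h₅⟩ := h
    exact coordMove_of_gluing hd₁ hd₂ h₁ h₂ h₃ h₄ h₅ (by linarith) (by linarith)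
  · obtain ⟨s, a, b, -, h₁, h₂, h₃, h₄, h₅⟩ := h
    obtain ⟨k₁, k₂⟩ := coordMove_of_gluing hd₁ hd₂ h₁ h₂ h₃ h₄ h₅ (by linarith) (by linarith)
    exact ⟨k₁.symm, k₂.symm⟩
  · obtain ⟨s, a, b, -, h₁, h₂, h₃, h₄, h₅⟩ := h
    exact (coordMove_of_gluing hd₂ hd₁ h₁ h₂ h₃ h₄ h₅ (by linarith) (by linarith)).symm
  · obtain ⟨s, a, b, -, h₁, h₂, h₃, h₄, h₅⟩ := h
    obtain ⟨k₁, k₂⟩ := coordMove_of_gluing hd₂ hd₁ h₁ h₂ h₃ h₄ h₅ (by linarith) (by linarith)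
    exact ⟨k₂.symm, k₁.symm⟩

lemma abs_cantor_sub_le_length {ι : IdentAssignment} {x y : Cell} (w : (IMC ι).Walk x y)
    (hw : ∀ v ∈ w.support, InCopy m C v) :
    |cantor m (x.val.1 - C.1 * 3 ^ m) - cantor m (y.val.1 - C.1 * 3 ^ m)| ≤ w.length ∧
      |cantor m (x.val.2 - C.2 * 3 ^ m) - cantor m (y.val.2 - C.2 * 3 ^ m)| ≤ w.length := by
  constructor
  · refine w.abs_sub_le_length (InCopy m C) (fun p ↦ cantor m (p.val.1 - C.1 * 3 ^ m))
      (fun u v hu hv h ↦ ?_) hw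
    obtain ⟨hu₀, hu', -⟩ := hu.sub_bounds
    obtain ⟨hv₀, hv', -⟩ := hv.sub_bounds
    exact abs_cantor_sub_le_one (coordMove_of_adj h hu hv).1 hu₀ hu' hv₀ hv'
  · refine w.abs_sub_le_length (InCopy m C) (fun p ↦ cantor m (p.val.2 - C.2 * 3 ^ m))
      (fun u v hu hv h ↦ ?_) hw
    obtain ⟨-, -, hu₀, hu'⟩ := hu.sub_bounds
    obtain ⟨-, -, hv₀, hv'⟩ := hv.sub_bounds
    exact abs_cantor_sub_le_one (coordMove_of_adj h hu hv).2 hu₀ hu' hv₀ hv'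

lemma two_pow_sub_one_le_length {ι : IdentAssignment} {d : Side} {x y : Cell}
    (w : (IMC ι).Walk x y) (hw : ∀ v ∈ w.support, InCopy m C v) (hx : OnSide m C d x)
    (hy : OnSide m C d.opp y) : 2 ^ m - 1 ≤ w.length := by
  obtain ⟨h₁, h₂⟩ := abs_cantor_sub_le_length w hw
  obtain ⟨-, hx⟩ := hx
  obtain ⟨-, hy⟩ := hy
  have hfar : (2 : ℤ) ^ m - 1 ≤ w.length := by
    cases d <;> simp only [Side.opp] at hx hy
    · rw [hx, hy, sub_self, cantor_zero_right, cantor_mul_add_one_sub_one, zero_sub,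
        abs_neg] at h₁
      exact le_of_abs_le h₁
    · rw [hx, hy, sub_self, cantor_zero_right, cantor_mul_add_one_sub_one, sub_zero] at h₁
      exact le_of_abs_le h₁
    · rw [hx, hy, sub_self, cantor_zero_right, cantor_mul_add_one_sub_one, zero_sub,
        abs_neg] at h₂
      exact le_of_abs_le h₂
    · rw [hx, hy, sub_self, cantor_zero_right, cantor_mul_add_one_sub_one, sub_zero] at h₂
      exact le_of_abs_le h₂
  zify [Nat.one_le_two_pow]
  exact hfar

end Copies

theorem cannot_cross_copy_general (t : IdentType) (m : ℕ) (C : ℤ × ℤ) (d : Side) :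
    (∀ (x y : Cell) (w : (IMC (uniform t)).Walk x y),
      (∀ v ∈ w.support, InCopy m C v) → OnSide m C d x → OnSide m C d.opp y →
        2 ^ m - 1 ≤ w.length) ∧
    (∀ (x z y : Cell) (w : (IMC (uniform t)).Walk x z) (h : (IMC (uniform t)).Adj z y),
      (∀ v ∈ w.support, InCopy m C v) → OnSide m C d x → OnSide m C d.opp z →
        ¬InCopy m C y → ¬((w.concat h).length ≤ 2 ^ m - 1)) := by
  refine ⟨fun x y w hw hx hy ↦ two_pow_sub_one_le_length w hw hx hy,
    fun x z y w h hw hx hz _ hlen ↦ ?_⟩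
  have hcross := two_pow_sub_one_le_length w hw hx hz
  have hpow : 1 ≤ 2 ^ m := Nat.one_le_two_pow
  rw [SimpleGraph.Walk.length_concat] at hlen
  omega

/-- For any identification type, a path of successively adjacent cells
contained in a copy of `V_m`, beginning at a cell on one `m`-edge of that copy and ending
at a cell on the opposite `m`-edge, has at least `2^m − 1` steps.  Consequently a path
inside the copy with at most `2^m − 1` steps that begins along one `m`-edge cannot leave
the copy along the opposite `m`-edge. -/
theorem cannot_cross_copy (t : IdentType) (m : ℕ) (C : ℤ × ℤ) (hC : IsCopy C) (d : Side) :
    (∀ (x y : Cell) (w : (IMC (uniform t)).Walk x y),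
      (∀ v ∈ w.support, InCopy m C v) → OnSide m C d x → OnSide m C d.opp y →
        2 ^ m - 1 ≤ w.length) ∧
    (∀ (x z y : Cell) (w : (IMC (uniform t)).Walk x z) (h : (IMC (uniform t)).Adj z y),
      (∀ v ∈ w.support, InCopy m C v) → OnSide m C d x → OnSide m C d.opp z →
        ¬InCopy m C y → ¬((w.concat h).length ≤ 2 ^ m - 1)) :=
  cannot_cross_copy_general t m C d

end MagicCarpet
end

section
/- Fix any identification type (torus, Klein bottle, or projective plane). For a path in IMC of length at most 2^m, let U be the first copy of V_m in its m-sequence. Then there exists a corner vertex x of U that is shared by every copy of V_m appearing in the m-sequence of the path. -/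
/-!
Magic carpets (Sierpinski carpet with torus / Klein bottle / projective plane
identifications of the sides of the vacant squares), following
"Analysis on the projective octagasket and other fractafolds" setup of the paper
"Magic carpets" (Goodman–Siu–Strichartz et al.).

Cells of the infinite blowup are indexed by their lower-left corners in `ℤ × ℤ`
(in units where every cell is a unit square).  A lattice square is a cell iff no
base-3 digit position carries the digit `1` in both coordinates simultaneously.
The vacant square ("hole") of level `s` at block `(a, b)` is the middle ninth of
the level-`(s+1)` block with block coordinates `(a, b)`, i.e. the square
`[a·3^(s+1)+3^s, a·3^(s+1)+2·3^s) × [b·3^(s+1)+3^s, b·3^(s+1)+2·3^s)`; it is a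
genuine vacant square of the carpet iff `(a,b)` itself satisfies the cell
condition.  Opposite sides of each vacant square are identified according to the
chosen identification type; orientation-reversal of a pair of sides reverses the
transverse coordinate.
-/

namespace MagicCarpet

/-!
Develop the path into the plane: following it cell by cell, unfold every vacant square of level
`≥ m` that it passes through (translate by the side length of the square and, for an
orientation-reversing gluing, reflect in the transverse direction). In each coordinate the developed
path then moves by unit steps or by jumps across vacant squares of level `< m`, and the latter never
cross the grid `3 ^ m ℤ`. Along such steps the discrete Cantor function `stair` of the distance
beyond a grid line grows by at most one, while it is `2 ^ m` one block further; so a walk of length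
`≤ 2 ^ m` stays in the two blocks on either side of a single grid line. Hence all developed cells
share a corner of the `3 ^ m`-grid. Pulled back through the development, this corner is a corner of
each copy of `V_m` met by the path, consecutive ones being equal or glued across a vacant square.
-/

theorem le_of_dvd_of_lt_add {n a b : ℤ} (ha : n ∣ a) (hb : n ∣ b) (h : a < b + n) : a ≤ b := by
  by_contra! hba
  have := Int.le_of_dvd (sub_pos.2 hba) (dvd_sub ha hb)
  omega

theorem add_le_of_dvd_of_lt {n a b : ℕ} (ha : n ∣ a) (hb : n ∣ b) (h : a < b) : a + n ≤ b := by
  have := Nat.le_of_dvd (by omega) (Nat.dvd_sub hb ha)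
  omega

/-- A discrete Cantor function: `stair (3 ^ k) = 2 ^ k`, yet `stair` grows by at most one along
a unit step or across the span of a vacant square. -/
def stair (n : ℕ) : ℕ :=
  if n = 0 then 0
  else if n < 2 * 3 ^ Nat.log 3 n then 2 ^ Nat.log 3 n
  else 2 ^ Nat.log 3 n + stair (n - 2 * 3 ^ Nat.log 3 n)
decreasing_by have := Nat.pow_pos (n := Nat.log 3 n) (show 0 < 3 by norm_num); omega

@[simp] theorem stair_zero : stair 0 = 0 := by
  rw [stair]; simp

theorem two_mul_three_pow_lt (k : ℕ) : 2 * 3 ^ k < 3 ^ (k + 1) := by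
  have := Nat.one_le_pow k 3 (by norm_num)
  rw [pow_succ]; omega

theorem stair_of_le_of_lt {k n : ℕ} (h1 : 3 ^ k ≤ n) (h2 : n < 2 * 3 ^ k) : stair n = 2 ^ k := by
  rw [stair, Nat.log_eq_of_pow_le_of_lt_pow h1 (h2.trans (two_mul_three_pow_lt k))]
  simp only [h2, ↓reduceIte, ite_eq_right_iff]
  omega

theorem stair_of_two_mul_le {k n : ℕ} (h1 : 2 * 3 ^ k ≤ n) (h2 : n < 3 ^ (k + 1)) :
    stair n = 2 ^ k + stair (n - 2 * 3 ^ k) := by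
  rw [stair, Nat.log_eq_of_pow_le_of_lt_pow (by omega) h2]
  simp only [show ¬ n < 2 * 3 ^ k by omega, ↓reduceIte, ite_eq_right_iff]
  omega

theorem stair_of_mem_Icc {k n : ℕ} (h1 : 3 ^ k ≤ n) (h2 : n ≤ 2 * 3 ^ k) : stair n = 2 ^ k := by
  rcases h2.lt_or_eq with h2 | rfl
  · exact stair_of_le_of_lt h1 h2
  · rw [stair_of_two_mul_le le_rfl (two_mul_three_pow_lt k)]
    simp

theorem stair_pow_sub_one (k : ℕ) : stair (3 ^ k - 1) = 2 ^ k - 1 := by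
  induction k with
  | zero => simp
  | succ k ih =>
    have h3 := Nat.one_le_pow k 3 (by norm_num)
    have h2 := Nat.one_le_pow k 2 (by norm_num)
    rw [stair_of_two_mul_le (k := k) (by rw [pow_succ]; omega) (by omega),
      show 3 ^ (k + 1) - 1 - 2 * 3 ^ k = 3 ^ k - 1 by rw [pow_succ]; omega, ih, pow_succ]
    omega

theorem stair_le_le_add_one_of_mem_span {s A x y : ℕ} (hA : 3 ^ (s + 1) ∣ A)
    (hx : A + 3 ^ s - 1 ≤ x) (hxy : x ≤ y) (hy : y ≤ A + 2 * 3 ^ s) :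
    stair x ≤ stair y ∧ stair y ≤ stair x + 1 := by
  induction A using Nat.strong_induction_on generalizing x y with
  | _ A ih =>
  have h3s := Nat.one_le_pow s 3 (by norm_num)
  have h3s' : 3 ^ (s + 1) = 3 * 3 ^ s := by ring
  rcases Nat.eq_zero_or_pos A with rfl | hA0
  · have hval : ∀ t, 3 ^ s - 1 ≤ t → t ≤ 2 * 3 ^ s →
        t = 3 ^ s - 1 ∧ stair t = 2 ^ s - 1 ∨ 3 ^ s ≤ t ∧ stair t = 2 ^ s := fun t h1 h2 => by
      rcases (show t = 3 ^ s - 1 ∨ 3 ^ s ≤ t by omega) with rfl | h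
      · exact Or.inl ⟨rfl, stair_pow_sub_one s⟩
      · exact Or.inr ⟨h, stair_of_mem_Icc h h2⟩
    have h2s := Nat.one_le_pow s 2 (by norm_num)
    rcases hval x (by omega) (by omega) with hx' | hx' <;>
      rcases hval y (by omega) (by omega) with hy' | hy' <;> omega
  set K := Nat.log 3 A
  have hK1 : 3 ^ K ≤ A := Nat.pow_log_le_self 3 hA0.ne'
  have hK2 : A < 3 ^ (K + 1) := Nat.lt_pow_succ_log_self (by norm_num) A
  have hsK : 3 ^ (s + 1) ∣ 3 ^ K :=
    pow_dvd_pow 3 (Nat.le_log_of_pow_le (by norm_num) (Nat.le_of_dvd hA0 hA))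
  have h3K : 3 ^ (K + 1) = 3 * 3 ^ K := by ring
  by_cases hmid : A < 2 * 3 ^ K
  · have := add_le_of_dvd_of_lt hA (dvd_mul_of_dvd_right hsK 2) hmid
    rw [stair_of_le_of_lt (k := K) (by omega) (by omega),
      stair_of_le_of_lt (k := K) (by omega) (by omega)]
    omega
  · have := add_le_of_dvd_of_lt hA (h3K ▸ dvd_mul_of_dvd_right hsK 3) hK2
    rw [stair_of_two_mul_le (k := K) (n := x) (by omega) (by omega),
      stair_of_two_mul_le (k := K) (n := y) (by omega) (by omega)]
    have := ih (A - 2 * 3 ^ K) (by omega) (Nat.dvd_sub hA (dvd_mul_of_dvd_right hsK 2))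
      (x := x - 2 * 3 ^ K) (y := y - 2 * 3 ^ K) (by omega) (by omega) (by omega)
    omega

/-- Each pair `n, n + 1` lies in the span of the vacant square of level `v₃ (n + 1)`. -/
theorem stair_le_succ_le_add_one (n : ℕ) :
    stair n ≤ stair (n + 1) ∧ stair (n + 1) ≤ stair n + 1 := by
  obtain ⟨e, r, hr, hn⟩ := Nat.exists_eq_pow_mul_and_not_dvd n.succ_ne_zero 3 (by norm_num)
  have hsplit : n + 1 = 3 ^ (e + 1) * (r / 3) + 3 ^ e * (r % 3) := by
    rw [show n + 1 = 3 ^ e * r from hn, pow_succ, mul_assoc, ← mul_add, Nat.div_add_mod]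
  have h3e := Nat.one_le_pow e 3 (by norm_num)
  rcases (show r % 3 = 1 ∨ r % 3 = 2 by omega) with hr3 | hr3 <;> rw [hr3] at hsplit <;>
    exact stair_le_le_add_one_of_mem_span (A := 3 ^ (e + 1) * (r / 3)) (Dvd.intro _ rfl)
      (by omega) (by omega) (by omega)

theorem stair_mono : Monotone stair :=
  monotone_nat_of_le_succ fun n => (stair_le_succ_le_add_one n).1

/-- The cells of a row (or column) meeting the vacant squares of level `s` and block
coordinate `a`, together with the cells on both sides of them. -/
def holeSpan (s : ℕ) (a : ℤ) : Set ℤ :=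
  Set.Icc (a * 3 ^ (s + 1) + 3 ^ s - 1) (a * 3 ^ (s + 1) + 2 * 3 ^ s)

theorem stair_toNat_le_of_mem_holeSpan {s : ℕ} {a u v : ℤ} (hu : u ∈ holeSpan s a)
    (hv : v ∈ holeSpan s a) : stair v.toNat ≤ stair u.toNat + 1 := by
  simp only [holeSpan, Set.mem_Icc] at hu hv
  have h3s : (1 : ℤ) ≤ 3 ^ s := one_le_pow₀ (by norm_num)
  have h3s' : (3 : ℤ) ^ (s + 1) = 3 * 3 ^ s := by ring
  rcases lt_or_ge a 0 with ha | ha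
  · have : a * 3 ^ (s + 1) ≤ -3 ^ (s + 1) := by nlinarith
    rw [show v.toNat = 0 by omega, show u.toNat = 0 by omega]
    omega
  lift a to ℕ using ha
  have hA : ((a * 3 ^ (s + 1) : ℕ) : ℤ) = a * 3 ^ (s + 1) := by push_cast; ring
  have h3 : ((3 ^ s : ℕ) : ℤ) = 3 ^ s := by push_cast; ring
  rcases le_total u v with huv | hvu
  · exact (stair_le_le_add_one_of_mem_span (A := a * 3 ^ (s + 1)) (Dvd.intro_left _ rfl)
      (x := u.toNat) (y := v.toNat) (by omega) (by omega) (by omega)).2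
  · have := (stair_le_le_add_one_of_mem_span (A := a * 3 ^ (s + 1)) (Dvd.intro_left _ rfl)
      (x := v.toNat) (y := u.toNat) (by omega) (by omega) (by omega)).1
    omega

/-- A step, in one coordinate, of the developed path: a unit move, or a jump across a vacant
square of level `< m` (such squares are not unfolded by the development). -/
def AxisStep (m : ℕ) (u v : ℤ) : Prop :=
  |u - v| ≤ 1 ∨ ∃ s < m, ∃ a, u ∈ holeSpan s a ∧ v ∈ holeSpan s a

namespace AxisStep

variable {m : ℕ} {u v : ℤ}

theorem symm (h : AxisStep m u v) : AxisStep m v u := by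
  rcases h with h | ⟨s, hs, a, hu, hv⟩
  · exact Or.inl (by rwa [abs_sub_comm])
  · exact Or.inr ⟨s, hs, a, hv, hu⟩

theorem add_right {X : ℤ} (hX : (3 : ℤ) ^ m ∣ X) (h : AxisStep m u v) :
    AxisStep m (u + X) (v + X) := by
  rcases h with h | ⟨s, hs, a, hu, hv⟩
  · exact Or.inl (by rwa [add_sub_add_right_eq_sub])
  · obtain ⟨k, hk⟩ := (pow_dvd_pow 3 (show s + 1 ≤ m from hs)).trans hX
    have e : (a + k) * 3 ^ (s + 1) = a * 3 ^ (s + 1) + X := by rw [hk]; ring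
    simp only [holeSpan, Set.mem_Icc] at hu hv
    exact Or.inr ⟨s, hs, a + k, by simp only [holeSpan, Set.mem_Icc]; omega,
      by simp only [holeSpan, Set.mem_Icc]; omega⟩

theorem const_sub {C : ℤ} (hC : (3 : ℤ) ^ m ∣ C + 1) (h : AxisStep m u v) :
    AxisStep m (C - u) (C - v) := by
  rcases h with h | ⟨s, hs, a, hu, hv⟩
  · exact Or.inl (by rwa [sub_sub_sub_cancel_left, abs_sub_comm])
  · obtain ⟨k, hk⟩ := (pow_dvd_pow 3 (show s + 1 ≤ m from hs)).trans hC
    have e : (k - a - 1) * 3 ^ (s + 1) = C + 1 - a * 3 ^ (s + 1) - 3 * 3 ^ s := by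
      rw [hk]; ring
    simp only [holeSpan, Set.mem_Icc] at hu hv
    exact Or.inr ⟨s, hs, k - a - 1, by simp only [holeSpan, Set.mem_Icc]; omega,
      by simp only [holeSpan, Set.mem_Icc]; omega⟩

/-- The span of a vacant square of level `< m` lies inside a `3 ^ m`-block. -/
theorem le_of_lt {X : ℤ} (hX : (3 : ℤ) ^ m ∣ X) (h : AxisStep m u v) (hu : u < X) : v ≤ X := by
  rcases h with h | ⟨s, hs, a, hu', hv⟩
  · rw [abs_le] at h; omega
  · simp only [holeSpan, Set.mem_Icc] at hu' hv
    have h3s : (1 : ℤ) ≤ 3 ^ s := one_le_pow₀ (by norm_num)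
    have h3s' : (3 : ℤ) ^ (s + 1) = 3 * 3 ^ s := by ring
    have := le_of_dvd_of_lt_add (n := 3 ^ (s + 1)) (a := a * 3 ^ (s + 1) + 3 ^ (s + 1))
      (b := X) ⟨a + 1, by ring⟩ ((pow_dvd_pow 3 (show s + 1 ≤ m from hs)).trans hX) (by omega)
    omega

theorem stair_toNat_sub_le {X : ℤ} (hX : (3 : ℤ) ^ m ∣ X) (h : AxisStep m u v) :
    stair (v - X).toNat ≤ stair (u - X).toNat + 1 := by
  rcases h.add_right (X := -X) (dvd_neg.2 hX) with h | ⟨s, -, a, hu, hv⟩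
  · rw [abs_le] at h
    calc stair (v - X).toNat ≤ stair ((u - X).toNat + 1) := stair_mono (by omega)
      _ ≤ stair (u - X).toNat + 1 := (stair_le_succ_le_add_one _).2
  · simpa only [← sub_eq_add_neg] using stair_toNat_le_of_mem_holeSpan hu hv

end AxisStep

/-- `X` is one of the two endpoints of the `3 ^ m`-block containing the unit cell `[u, u + 1]`. -/
def IsBlockEnd (m : ℕ) (u X : ℤ) : Prop := (3 : ℤ) ^ m ∣ X ∧ X - 3 ^ m ≤ u ∧ u < X + 3 ^ m

namespace IsBlockEnd

variable {m : ℕ} {u X : ℤ}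

theorem eq_or_eq (h : IsBlockEnd m u X) : X = u / 3 ^ m * 3 ^ m ∨ X = (u / 3 ^ m + 1) * 3 ^ m := by
  obtain ⟨hX, h1, h2⟩ := h
  have h3m : (0 : ℤ) < 3 ^ m := by positivity
  have hq1 := Int.ediv_mul_le u h3m.ne'
  have hq2 := Int.lt_ediv_add_one_mul_self u h3m
  have hq : (3 : ℤ) ^ m ∣ u / 3 ^ m * 3 ^ m := Dvd.intro_left _ rfl
  rw [add_one_mul] at hq2 ⊢
  rcases (le_of_dvd_of_lt_add hq hX (by omega)).eq_or_lt with h | h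
  · exact Or.inl h.symm
  · have := le_of_dvd_of_lt_add (dvd_add hq dvd_rfl) hX (by omega)
    have := le_of_dvd_of_lt_add hX (dvd_add hq dvd_rfl) (by omega)
    omega

theorem eq_of_sub_one {L : ℤ} (hL : (3 : ℤ) ^ m ∣ L) (h₁ : IsBlockEnd m (L - 1) X)
    (h₂ : IsBlockEnd m L X) : X = L :=
  le_antisymm (le_of_dvd_of_lt_add h₁.1 hL (by linarith [h₁.2.1]))
    (le_of_dvd_of_lt_add hL h₁.1 (by linarith [h₂.2.2]))

theorem mem_Icc {A B : ℤ} (hA : (3 : ℤ) ^ m ∣ A) (hB : (3 : ℤ) ^ m ∣ B) (hAu : A ≤ u) (huB : u < B)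
    (h : IsBlockEnd m u X) : A ≤ X ∧ X ≤ B :=
  ⟨le_of_dvd_of_lt_add hA h.1 (by linarith [h.2.2]),
    le_of_dvd_of_lt_add h.1 hB (by linarith [h.2.1])⟩

end IsBlockEnd

def IsAxisWalk (m T : ℕ) (n : ℕ → ℤ) : Prop := ∀ t < T, AxisStep m (n t) (n (t + 1))

namespace IsAxisWalk

variable {m T : ℕ} {n : ℕ → ℤ} {X : ℤ} {t₀ t : ℕ}

theorem reflect (hn : IsAxisWalk m T n) : IsAxisWalk m T fun t => -1 - n t :=
  fun t ht => (hn t ht).const_sub (by simp)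

/-- Once the walk has met the grid line `X`, `stair (n t - X)` grows by at most one per step,
while it is at least `stair (3 ^ m) = 2 ^ m` beyond the next grid line. -/
theorem lt_add_of_lt (hn : IsAxisWalk m T n) (hT : T ≤ 2 ^ m) (hX : (3 : ℤ) ^ m ∣ X)
    (h₀ : n t₀ < X) (ht₀ : t₀ ≤ t) (ht : t ≤ T) : n t < X + 3 ^ m := by
  have h3m : (0 : ℤ) < 3 ^ m := by positivity
  rcases ht₀.eq_or_lt with rfl | ht₀
  · omega
  have hpot : ∀ j, t₀ + 1 ≤ j → j ≤ T → stair (n j - X).toNat ≤ j - (t₀ + 1) := by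
    intro j hj
    induction j, hj using Nat.le_induction with
    | base =>
      intro _
      have := (hn t₀ (by omega)).le_of_lt hX h₀
      simp [show (n (t₀ + 1) - X).toNat = 0 by omega]
    | succ j hj ih =>
      intro hjT
      have := (hn j (by omega)).stair_toNat_sub_le hX
      have := ih (by omega)
      omega
  by_contra! hfar
  have hcast : ((3 ^ m : ℕ) : ℤ) = 3 ^ m := by push_cast; ring
  have := stair_mono (show 3 ^ m ≤ (n t - X).toNat by omega)
  rw [stair_of_mem_Icc le_rfl (by omega)] at this
  have := hpot t ht₀ ht
  omega

theorem sub_le_of_le (hn : IsAxisWalk m T n) (hT : T ≤ 2 ^ m) (hX : (3 : ℤ) ^ m ∣ X)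
    (h₀ : X ≤ n t₀) (ht₀ : t₀ ≤ t) (ht : t ≤ T) : X - 3 ^ m ≤ n t := by
  have := hn.reflect.lt_add_of_lt hT (dvd_neg.2 hX) (show -1 - n t₀ < -X by omega) ht₀ ht
  omega

/-- A walk reaching both neighbouring blocks of its starting block would cross a whole block after
touching a grid line. -/
theorem exists_isBlockEnd (hn : IsAxisWalk m T n) (hT : T ≤ 2 ^ m) :
    ∃ X, ∀ t ≤ T, IsBlockEnd m (n t) X := by
  have h3m : (0 : ℤ) < 3 ^ m := by positivity
  set X₀ := n 0 / 3 ^ m * 3 ^ m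
  have hX₀ : (3 : ℤ) ^ m ∣ X₀ := Dvd.intro_left _ rfl
  have h₀ : X₀ ≤ n 0 ∧ n 0 < X₀ + 3 ^ m :=
    ⟨Int.ediv_mul_le _ h3m.ne', by rw [← add_one_mul]; exact Int.lt_ediv_add_one_mul_self _ h3m⟩
  by_cases hR : ∃ t₁ ≤ T, X₀ + 3 ^ m ≤ n t₁
  · obtain ⟨t₁, ht₁, hR⟩ := hR
    refine ⟨X₀ + 3 ^ m, fun t ht => ⟨dvd_add hX₀ dvd_rfl, ?_, ?_⟩⟩
    · rcases le_total t t₁ with h | h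
      · by_contra! hlt
        have := hn.lt_add_of_lt hT hX₀ (by omega) h ht₁
        omega
      · have := hn.sub_le_of_le hT (dvd_add hX₀ dvd_rfl) hR h ht
        omega
    · have := hn.lt_add_of_lt hT (dvd_add hX₀ dvd_rfl) (by omega) (Nat.zero_le t) ht
      omega
  · push Not at hR
    refine ⟨X₀, fun t ht => ⟨hX₀, ?_, hR t ht⟩⟩
    exact hn.sub_le_of_le hT hX₀ h₀.1 (Nat.zero_le t) ht

end IsAxisWalk


/-- The isometry `X ↦ ± X + shift` of `ℤ`, which preserves the grid `3 ^ m ℤ`; `cell` is its action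
on unit cells (indexed by their left endpoints) and `pull` its inverse on lattice points. -/
@[ext] structure AxisMap (m : ℕ) where
  flip : Bool
  shift : ℤ
  dvd_shift : (3 : ℤ) ^ m ∣ shift

namespace AxisMap

variable {m : ℕ} (A : AxisMap m) {u v X : ℤ}

def cell (u : ℤ) : ℤ := if A.flip then A.shift - 1 - u else u + A.shift

def pull (X : ℤ) : ℤ := if A.flip then A.shift - X else X - A.shift

theorem abs_cell_sub_cell : |A.cell u - A.cell v| = |u - v| := by
  unfold cell
  split_ifs
  · rw [sub_sub_sub_cancel_left, abs_sub_comm]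
  · rw [add_sub_add_right_eq_sub]

theorem axisStep_cell (h : AxisStep m u v) : AxisStep m (A.cell u) (A.cell v) := by
  unfold cell
  split_ifs
  · exact h.const_sub (by simpa using A.dvd_shift)
  · exact h.add_right A.dvd_shift

theorem isBlockEnd_pull (h : IsBlockEnd m (A.cell u) X) : IsBlockEnd m u (A.pull X) := by
  obtain ⟨hX, h1, h2⟩ := h
  unfold cell at h1 h2
  unfold pull
  split_ifs at h1 h2 ⊢
  · exact ⟨dvd_sub A.dvd_shift hX, by omega, by omega⟩
  · exact ⟨dvd_sub hX A.dvd_shift, by omega, by omega⟩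

/-- The map `A ∘ (· - δ)`. -/
def translate (δ : ℤ) (hδ : (3 : ℤ) ^ m ∣ δ) : AxisMap m where
  flip := A.flip
  shift := if A.flip then A.shift + δ else A.shift - δ
  dvd_shift := by split_ifs <;> first | exact dvd_add A.dvd_shift hδ | exact dvd_sub A.dvd_shift hδ

/-- The map `A ∘ (K - ·)`. -/
def reflect (K : ℤ) (hK : (3 : ℤ) ^ m ∣ K) : AxisMap m where
  flip := !A.flip
  shift := if A.flip then A.shift - K else A.shift + K
  dvd_shift := by split_ifs <;> first | exact dvd_add A.dvd_shift hK | exact dvd_sub A.dvd_shift hK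

variable {δ K : ℤ} {hδ : (3 : ℤ) ^ m ∣ δ} {hK : (3 : ℤ) ^ m ∣ K}

@[simp] theorem cell_translate : (A.translate δ hδ).cell u = A.cell (u - δ) := by
  unfold cell translate; split_ifs <;> ring

@[simp] theorem pull_translate : (A.translate δ hδ).pull X = A.pull X + δ := by
  unfold pull translate; split_ifs <;> ring

@[simp] theorem cell_reflect : (A.reflect K hK).cell u = A.cell (K - 1 - u) := by
  obtain ⟨_ | _, t, ht⟩ := A <;>
    simp only [cell, reflect, Bool.not_false, Bool.not_true, Bool.false_eq_true, ↓reduceIte] <;>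
    ring

@[simp] theorem pull_reflect : (A.reflect K hK).pull X = K - A.pull X := by
  obtain ⟨_ | _, t, ht⟩ := A <;>
    simp only [pull, reflect, Bool.not_false, Bool.not_true, Bool.false_eq_true, ↓reduceIte] <;>
    ring

theorem translate_neg_translate {hδ' : (3 : ℤ) ^ m ∣ -δ} :
    (A.translate (-δ) hδ').translate δ hδ = A := by
  ext
  · rfl
  · unfold translate; split_ifs <;> ring

theorem reflect_reflect : (A.reflect K hK).reflect K hK = A := by
  obtain ⟨_ | _, t, ht⟩ := A <;> ext <;> simp [reflect]

end AxisMap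

structure Frame (m : ℕ) where
  x : AxisMap m
  y : AxisMap m

namespace Frame

variable {m : ℕ} (F : Frame m)

def cell (c : ℤ × ℤ) : ℤ × ℤ := (F.x.cell c.1, F.y.cell c.2)

def pull (P : ℤ × ℤ) : ℤ × ℤ := (F.x.pull P.1, F.y.pull P.2)

def swap : Frame m := ⟨F.y, F.x⟩

end Frame

def IsBlockCorner (m : ℕ) (d P : ℤ × ℤ) : Prop := IsBlockEnd m d.1 P.1 ∧ IsBlockEnd m d.2 P.2

theorem Frame.isBlockCorner_pull {m : ℕ} (F : Frame m) {c P : ℤ × ℤ}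
    (h : IsBlockCorner m (F.cell c) P) : IsBlockCorner m c (F.pull P) :=
  ⟨F.x.isBlockEnd_pull h.1, F.y.isBlockEnd_pull h.2⟩

theorem isCornerPt_copyOf {m : ℕ} {c : Cell} {P : ℤ × ℤ} (h : IsBlockCorner m c.val P) :
    IsCornerPt m (copyOf m c) P :=
  ⟨h.1.eq_or_eq, h.2.eq_or_eq⟩

/-- The step from the cell `c`, developed by `F`, to the cell `c'`, developed by `F'`, is a step
of the developed path, and each corner of the `3 ^ m`-grid shared by the two developed cells
pulls back to `r`-related points. -/
def DevStep (r : ℤ × ℤ → ℤ × ℤ → Prop) (m : ℕ) (F F' : Frame m) (c c' : ℤ × ℤ) : Prop :=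
  AxisStep m (F.x.cell c.1) (F'.x.cell c'.1) ∧ AxisStep m (F.y.cell c.2) (F'.y.cell c'.2) ∧
    ∀ P, IsBlockCorner m (F.cell c) P → IsBlockCorner m (F'.cell c') P → r (F.pull P) (F'.pull P)

namespace DevStep

variable {r r' : ℤ × ℤ → ℤ × ℤ → Prop} {m : ℕ} {F F' : Frame m} {c c' : ℤ × ℤ}

theorem mono (h : DevStep r m F F' c c') (hr : ∀ P Q, r P Q → r' P Q) : DevStep r' m F F' c c' :=
  ⟨h.1, h.2.1, fun P hP hP' => hr _ _ (h.2.2 P hP hP')⟩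

theorem symm (h : DevStep r m F F' c c') : DevStep (fun P Q => r Q P) m F' F c' c :=
  ⟨h.1.symm, h.2.1.symm, fun P hP hP' => h.2.2 P hP' hP⟩

theorem of_swap (h : DevStep r m F.swap F'.swap c.swap c'.swap) :
    DevStep (fun P Q => r P.swap Q.swap) m F F' c c' :=
  ⟨h.2.1, h.1, fun P hP hP' => h.2.2 P.swap ⟨hP.2, hP.1⟩ ⟨hP'.2, hP'.1⟩⟩

end DevStep

/-- `HoleAdjH`, for a given vacant square and orientation flag `f`. -/
def CrossesHole (s : ℕ) (a b : ℤ) (f : Bool) (p q : ℤ × ℤ) : Prop :=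
  p.1 = a * 3 ^ (s + 1) + 3 ^ s - 1 ∧ q.1 = a * 3 ^ (s + 1) + 2 * 3 ^ s ∧
    b * 3 ^ (s + 1) + 3 ^ s ≤ p.2 ∧ p.2 < b * 3 ^ (s + 1) + 2 * 3 ^ s ∧
    q.2 = if f then 2 * (b * 3 ^ (s + 1) + 3 ^ s) + 3 ^ s - 1 - p.2 else p.2

/-- The first clause of `PtGlue`, for a given vacant square and orientation flag `f`. -/
def GluesAcross (s : ℕ) (a b : ℤ) (f : Bool) (P Q : ℤ × ℤ) : Prop :=
  P.1 = a * 3 ^ (s + 1) + 3 ^ s ∧ Q.1 = a * 3 ^ (s + 1) + 2 * 3 ^ s ∧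
    b * 3 ^ (s + 1) + 3 ^ s ≤ P.2 ∧ P.2 ≤ b * 3 ^ (s + 1) + 2 * 3 ^ s ∧
    Q.2 = if f then 2 * (b * 3 ^ (s + 1) + 3 ^ s) + 3 ^ s - P.2 else P.2

section Crossing

variable {m s : ℕ} {a b : ℤ} {f : Bool} {p q : ℤ × ℤ}

theorem three_pow_dvd_add (hs : m ≤ s) (a k : ℤ) : (3 : ℤ) ^ m ∣ a * 3 ^ (s + 1) + k * 3 ^ s :=
  dvd_add ((pow_dvd_pow 3 (hs.trans s.le_succ)).mul_left a) ((pow_dvd_pow 3 hs).mul_left k)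

theorem three_pow_dvd_mirror (hs : m ≤ s) (b : ℤ) :
    (3 : ℤ) ^ m ∣ 2 * (b * 3 ^ (s + 1) + 3 ^ s) + 3 ^ s := by
  convert three_pow_dvd_add hs (2 * b) 3 using 1
  ring

/-- Unfolding a vacant square of level `s ≥ m`: translate horizontally by its side length and,
for an orientation-reversing gluing, reflect vertically in its horizontal midline. -/
def crossFrame (hs : m ≤ s) (b : ℤ) (f : Bool) (F : Frame m) : Frame m where
  x := F.x.translate (3 ^ s) (pow_dvd_pow 3 hs)
  y := if f then F.y.reflect _ (three_pow_dvd_mirror hs b) else F.y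

def uncrossFrame (hs : m ≤ s) (b : ℤ) (f : Bool) (F : Frame m) : Frame m where
  x := F.x.translate (-3 ^ s) (pow_dvd_pow 3 hs).neg_right
  y := if f then F.y.reflect _ (three_pow_dvd_mirror hs b) else F.y

theorem crossFrame_uncrossFrame (hs : m ≤ s) (F : Frame m) :
    crossFrame hs b f (uncrossFrame hs b f F) = F := by
  obtain ⟨x, y⟩ := F
  cases f <;>
    simp [crossFrame, uncrossFrame, AxisMap.translate_neg_translate, AxisMap.reflect_reflect]

theorem devStep_of_crossesHole_of_lt (hs : s < m) (h : CrossesHole s a b f p q) (F : Frame m) :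
    DevStep (· = ·) m F F p q := by
  obtain ⟨h1, h2, h3, h4, h5⟩ := h
  have h3s : (1 : ℤ) ≤ 3 ^ s := one_le_pow₀ (by norm_num)
  have hq : b * 3 ^ (s + 1) + 3 ^ s ≤ q.2 ∧ q.2 < b * 3 ^ (s + 1) + 2 * 3 ^ s := by
    split_ifs at h5 <;> omega
  refine ⟨F.x.axisStep_cell (Or.inr ⟨s, hs, a, ?_, ?_⟩),
    F.y.axisStep_cell (Or.inr ⟨s, hs, b, ?_, ?_⟩), fun _ _ _ => rfl⟩ <;>
  simp only [holeSpan, Set.mem_Icc] <;> omega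

theorem devStep_crossFrame (hs : m ≤ s) (h : CrossesHole s a b f p q) (F : Frame m) :
    DevStep (GluesAcross s a b f) m F (crossFrame hs b f F) p q := by
  obtain ⟨h1, h2, h3, h4, h5⟩ := h
  have hx : (crossFrame hs b f F).x.cell q.1 = F.x.cell (p.1 + 1) := by
    simp only [crossFrame, AxisMap.cell_translate]; congr 1; omega
  have hy : (crossFrame hs b f F).y.cell q.2 = F.y.cell p.2 := by
    cases f
    · simp only [crossFrame, Bool.false_eq_true, ↓reduceIte] at h5 ⊢
      rw [h5]
    · simp only [crossFrame, ↓reduceIte, AxisMap.cell_reflect] at h5 ⊢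
      congr 1
      omega
  refine ⟨Or.inl ?_, Or.inl ?_, fun P hP hP' => ?_⟩
  · rw [hx, F.x.abs_cell_sub_cell]; simp
  · rw [hy]; simp
  have hPx : F.x.pull P.1 = a * 3 ^ (s + 1) + 3 ^ s := by
    have h₁ := F.x.isBlockEnd_pull hP.1
    have h₂ := F.x.isBlockEnd_pull (show IsBlockEnd m (F.x.cell (p.1 + 1)) P.1 from hx ▸ hP'.1)
    rw [h1] at h₁ h₂
    rw [sub_add_cancel] at h₂
    exact h₁.eq_of_sub_one (by simpa using three_pow_dvd_add hs a 1) h₂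
  have hPy := (F.y.isBlockEnd_pull hP.2).mem_Icc (by simpa using three_pow_dvd_add hs b 1)
    (three_pow_dvd_add hs b 2) h3 h4
  refine ⟨hPx, ?_, hPy.1, hPy.2, ?_⟩
  · simp only [Frame.pull, crossFrame, AxisMap.pull_translate, hPx]; ring
  · cases f <;> simp [Frame.pull, crossFrame]

theorem CrossesHole.exists_devStep (h : CrossesHole s a b f p q) :
    (∀ F : Frame m, ∃ F', DevStep (fun P Q => P = Q ∨ GluesAcross s a b f P Q) m F F' p q) ∧
      ∀ F' : Frame m, ∃ F, DevStep (fun P Q => P = Q ∨ GluesAcross s a b f P Q) m F F' p q := by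
  rcases lt_or_ge s m with hs | hs
  · exact ⟨fun F => ⟨F, (devStep_of_crossesHole_of_lt hs h F).mono fun _ _ => Or.inl⟩,
      fun F => ⟨F, (devStep_of_crossesHole_of_lt hs h F).mono fun _ _ => Or.inl⟩⟩
  refine ⟨fun F => ⟨_, (devStep_crossFrame hs h F).mono fun _ _ => Or.inr⟩,
    fun F' => ⟨uncrossFrame hs b f F', ?_⟩⟩
  have := (devStep_crossFrame hs h (uncrossFrame hs b f F')).mono
    (r' := fun P Q => P = Q ∨ GluesAcross s a b f P Q) fun _ _ => Or.inr
  rwa [crossFrame_uncrossFrame] at this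

end Crossing

section Development

variable {ι : IdentAssignment} {m : ℕ}

theorem devStep_self {c c' : ℤ × ℤ} (h : |c.1 - c'.1| + |c.2 - c'.2| = 1) (F : Frame m) :
    DevStep (· = ·) m F F c c' := by
  refine ⟨Or.inl ?_, Or.inl ?_, fun _ _ _ => rfl⟩
  · rw [F.x.abs_cell_sub_cell]; linarith [abs_nonneg (c.2 - c'.2)]
  · rw [F.y.abs_cell_sub_cell]; linarith [abs_nonneg (c.1 - c'.1)]

theorem ptEquiv_of_gluesAcross {s : ℕ} {a b : ℤ} (hab : IsCell (a, b)) {P Q : ℤ × ℤ}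
    (h : P = Q ∨ GluesAcross s a b (flipH (ι s a b)) P Q) : PtEquiv ι P Q := by
  rcases h with rfl | h
  · exact .refl _
  · exact .rel _ _ (Or.inl ⟨s, a, b, hab, Or.inl h⟩)

theorem ptEquiv_of_gluesAcross_swap {s : ℕ} {a b : ℤ} (hab : IsCell (a, b)) {P Q : ℤ × ℤ}
    (h : P.swap = Q.swap ∨ GluesAcross s b a (flipV (ι s a b)) P.swap Q.swap) : PtEquiv ι P Q := by
  rcases h with h | h
  · rw [Prod.swap_inj.1 h]; exact .refl _
  · exact .rel _ _ (Or.inl ⟨s, a, b, hab, Or.inr h⟩)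

theorem exists_devStep {c c' : ℤ × ℤ} (h : IMCAdj ι c c') (F : Frame m) :
    ∃ F', DevStep (PtEquiv ι) m F F' c c' := by
  obtain ⟨-, -, -, h⟩ := h
  rcases h with h | ⟨s, a, b, hab, h⟩ | ⟨s, a, b, hab, h⟩ | ⟨s, a, b, hab, h⟩ | ⟨s, a, b, hab, h⟩
  · exact ⟨F, (devStep_self h F).mono fun P _ h => h ▸ .refl P⟩
  · obtain ⟨F', hF'⟩ := (CrossesHole.exists_devStep h).1 F
    exact ⟨F', hF'.mono fun _ _ => ptEquiv_of_gluesAcross hab⟩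
  · obtain ⟨F', hF'⟩ := (CrossesHole.exists_devStep h).2 F
    exact ⟨F', hF'.symm.mono fun _ _ h => (ptEquiv_of_gluesAcross hab h).symm⟩
  · have h : CrossesHole s b a (flipV (ι s a b)) c.swap c'.swap := h
    obtain ⟨G, hG⟩ := h.exists_devStep.1 F.swap
    exact ⟨G.swap, (DevStep.of_swap (F := F) (F' := G.swap) hG).mono fun _ _ =>
      ptEquiv_of_gluesAcross_swap hab⟩
  · have h : CrossesHole s b a (flipV (ι s a b)) c'.swap c.swap := h
    obtain ⟨G, hG⟩ := h.exists_devStep.2 F.swap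
    exact ⟨G.swap, (DevStep.of_swap (F := G.swap) (F' := F) hG).symm.mono fun _ _ h =>
      (ptEquiv_of_gluesAcross_swap hab h).symm⟩

theorem exists_development {x y : Cell} (w : (IMC ι).Walk x y) :
    ∃ F : ℕ → Frame m, ∀ i < w.length,
      DevStep (PtEquiv ι) m (F i) (F (i + 1)) (w.getVert i).val (w.getVert (i + 1)).val := by
  have hstep : ∀ i (F : Frame m), ∃ F', i < w.length →
      DevStep (PtEquiv ι) m F F' (w.getVert i).val (w.getVert (i + 1)).val := fun i F =>
    if hi : i < w.length then (exists_devStep (w.adj_getVert_succ hi) F).imp fun _ h _ => h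
    else ⟨F, fun h => absurd h hi⟩
  choose next hnext using hstep
  let F₀ : Frame m := ⟨⟨false, 0, dvd_zero _⟩, ⟨false, 0, dvd_zero _⟩⟩
  exact ⟨fun i => Nat.rec (motive := fun _ => Frame m) F₀ next i, fun i hi => hnext i _ hi⟩

theorem exists_cornerPt_ptEquiv {x y : Cell} (w : (IMC ι).Walk x y) (hlen : w.length ≤ 2 ^ m) :
    ∃ p, IsCornerPt m (copyOf m x) p ∧
      ∀ c ∈ w.support, ∃ q, IsCornerPt m (copyOf m c) q ∧ PtEquiv ι p q := by
  obtain ⟨F, hF⟩ := exists_development (m := m) w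
  obtain ⟨X, hX⟩ := IsAxisWalk.exists_isBlockEnd
    (n := fun i => (F i).x.cell (w.getVert i).val.1) (fun i hi => (hF i hi).1) hlen
  obtain ⟨Y, hY⟩ := IsAxisWalk.exists_isBlockEnd
    (n := fun i => (F i).y.cell (w.getVert i).val.2) (fun i hi => (hF i hi).2.1) hlen
  have hcorner (i : ℕ) (hi : i ≤ w.length) :
      IsBlockCorner m ((F i).cell (w.getVert i).val) (X, Y) := ⟨hX i hi, hY i hi⟩
  have hequiv (i : ℕ) (hi : i ≤ w.length) : PtEquiv ι ((F 0).pull (X, Y)) ((F i).pull (X, Y)) := by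
    induction i with
    | zero => exact .refl _
    | succ i ih =>
      exact (ih (by omega)).trans _ _ _
        ((hF i (by omega)).2.2 _ (hcorner i (by omega)) (hcorner (i + 1) hi))
  refine ⟨(F 0).pull (X, Y), ?_, fun c hc => ?_⟩
  · simpa only [w.getVert_zero] using
      isCornerPt_copyOf ((F 0).isBlockCorner_pull (hcorner 0 (Nat.zero_le _)))
  · obtain ⟨i, rfl, hi⟩ := SimpleGraph.Walk.mem_support_iff_exists_getVert.1 hc
    exact ⟨_, isCornerPt_copyOf ((F i).isBlockCorner_pull (hcorner i hi)), hequiv i hi⟩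

end Development

theorem _root_.List.getElem?_zero_destutter' {α : Type*} (R : α → α → Prop) [DecidableRel R]
    (a : α) (l : List α) : (l.destutter' R a)[0]? = some a := by
  induction l generalizing a with
  | nil => rfl
  | cons b l ih =>
    rw [List.destutter'_cons]
    split_ifs
    · rfl
    · exact ih a

/-- For any identification type and a path of length at most `2^m`, if `U`
is the first copy of `V_m` in its `m`-sequence, then there is a corner vertex of `U`
shared (after identification) by every copy of `V_m` appearing in the `m`-sequence. -/
theorem common_corner_vertex (t : IdentType) (m : ℕ) {x y : Cell}
    (w : (IMC (uniform t)).Walk x y) (hlen : w.length ≤ 2 ^ m)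
    (U : ℤ × ℤ) (hU : (mSeq (uniform t) m w)[0]? = some U) :
    ∃ p : ℤ × ℤ, IsCornerPt m U p ∧
      ∀ C ∈ mSeq (uniform t) m w, ∃ q : ℤ × ℤ, IsCornerPt m C q ∧ PtEquiv (uniform t) p q := by
  obtain ⟨p, hp, hall⟩ := exists_cornerPt_ptEquiv w hlen
  have hUx : U = copyOf m x := by
    rw [mSeq, ← w.cons_tail_support, List.map_cons, List.destutter_cons',
      List.getElem?_zero_destutter'] at hU
    exact (Option.some.inj hU).symm
  refine ⟨p, hUx ▸ hp, fun C hC => ?_⟩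
  obtain ⟨c, hc, rfl⟩ := List.mem_map.1 ((List.destutter_sublist _ _).subset hC)
  exact hall c hc

end MagicCarpet
end
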